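/- arXiv:2101.08519 — 8 statements merged into one kernel-verified Lean document; each statement's English description precedes it below -/
import Mathlib

section
/- Let η̃ > 0 and let (ξ_k)_{k≥1}, (E_k)_{k≥1}, (ε̃_k)_{k≥1} be sequences of nonnegative real numbers such that Σ_{k=1}^∞ ε̃_k² < ∞ and η̃·ξ_k² ≤ (E_k − E_{k+1}) + ε̃_k² for every k ≥ 1. Then min_{1≤t≤k} ξ_t = o(1/√k); that is, √k · (min_{1≤t≤k} ξ_t) → 0 as k → ∞. -/
/-!
Summing the recursion telescopes the `E`-terms, so `η Σ ξ_t² ≤ E_1 + Σ ε̃_t² < ∞`.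
The minimum `m_k` of `ξ_1, …, ξ_k` is at most each of the roughly `k/2` terms `ξ_t` with
`k/2 < t ≤ k`, hence `k m_k² ≤ 2 Σ_{k/2 < t ≤ k} ξ_t²`, a tail block of a convergent series,
which tends to `0`.
-/

open Filter Finset Topology

theorem summable_of_le_sub_add {a b E : ℕ → ℝ} (ha : ∀ k, 0 ≤ a k) (hb : Summable b)
    (hb₀ : ∀ k, 0 ≤ b k) (hE : ∀ k, 0 ≤ E k) (h : ∀ k, a k ≤ E k - E (k + 1) + b k) :
    Summable a := by
  refine summable_of_sum_range_le (c := E 0 + ∑' k, b k) ha fun n => ?_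
  calc ∑ k ∈ range n, a k ≤ ∑ k ∈ range n, (E k - E (k + 1) + b k) := sum_le_sum fun k _ => h k
    _ = E 0 - E n + ∑ k ∈ range n, b k := by rw [sum_add_distrib, sum_range_sub']
    _ ≤ E 0 + ∑' k, b k := by
      linarith [hE n, hb.sum_le_tsum (range n) fun k _ => hb₀ k]

theorem Summable.tendsto_sum_Ico_half {α : Type*} [AddCommGroup α] [TopologicalSpace α]
    [IsTopologicalAddGroup α] {f : ℕ → α} (hf : Summable f) :
    Tendsto (fun k => ∑ t ∈ Ico (k / 2) k, f t) atTop (𝓝 0) := by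
  have hhalf : Tendsto (fun k : ℕ => k / 2) atTop atTop :=
    Nat.tendsto_div_const_atTop two_ne_zero
  have hS := hf.hasSum.tendsto_sum_nat
  simpa [sum_Ico_eq_sub _ (Nat.div_le_self _ 2)] using hS.sub (hS.comp hhalf)

theorem natCast_mul_sq_le_two_mul_sum_Ico {ξ : ℕ → ℝ} {c : ℝ} (hc : 0 ≤ c) (k : ℕ)
    (h : ∀ t, 1 ≤ t → t ≤ k → c ≤ ξ t) :
    (k : ℝ) * c ^ 2 ≤ 2 * ∑ t ∈ Ico (k / 2) k, ξ (t + 1) ^ 2 := by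
  have hterm : ∀ t ∈ Ico (k / 2) k, c ^ 2 ≤ ξ (t + 1) ^ 2 := fun t ht => by
    rw [mem_Ico] at ht
    exact pow_le_pow_left₀ hc (h (t + 1) (by omega) (by omega)) 2
  have hcard : (k : ℝ) ≤ 2 * ((k - k / 2 : ℕ) : ℝ) := by
    exact_mod_cast (by omega : k ≤ 2 * (k - k / 2))
  calc (k : ℝ) * c ^ 2 ≤ 2 * (((k - k / 2 : ℕ) : ℝ) * c ^ 2) := by
        nlinarith [sq_nonneg c]
    _ ≤ 2 * ∑ t ∈ Ico (k / 2) k, ξ (t + 1) ^ 2 := by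
        have := card_nsmul_le_sum (Ico (k / 2) k) _ _ hterm
        rw [Nat.card_Ico, nsmul_eq_mul] at this
        linarith

section sInfIcc

variable {ξ : ℕ → ℝ} (hξ : ∀ k, 1 ≤ k → 0 ≤ ξ k)
include hξ

theorem sInf_image_Icc_nonneg (k : ℕ) : 0 ≤ sInf (ξ '' Set.Icc 1 k) :=
  Real.sInf_nonneg <| by
    rintro _ ⟨t, ht, rfl⟩
    exact hξ t ht.1

theorem sInf_image_Icc_le {k t : ℕ} (h₁ : 1 ≤ t) (h₂ : t ≤ k) : sInf (ξ '' Set.Icc 1 k) ≤ ξ t :=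
  csInf_le ⟨0, by rintro _ ⟨s, hs, rfl⟩; exact hξ s hs.1⟩ ⟨t, ⟨h₁, h₂⟩, rfl⟩

theorem tendsto_sqrt_mul_sInf_image_Icc (hsum : Summable fun t => ξ (t + 1) ^ 2) :
    Tendsto (fun k : ℕ => Real.sqrt k * sInf (ξ '' Set.Icc 1 k)) atTop (𝓝 0) := by
  have hsq : Tendsto (fun k : ℕ => (k : ℝ) * sInf (ξ '' Set.Icc 1 k) ^ 2) atTop (𝓝 0) := by
    have := hsum.tendsto_sum_Ico_half.const_mul 2
    rw [mul_zero] at this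
    exact squeeze_zero (fun k => by positivity)
      (fun k => natCast_mul_sq_le_two_mul_sum_Ico (sInf_image_Icc_nonneg hξ k) k
        fun t h₁ h₂ => sInf_image_Icc_le hξ h₁ h₂) this
  simpa [Real.sqrt_mul (Nat.cast_nonneg _), Real.sqrt_sq (sInf_image_Icc_nonneg hξ _)]
    using hsq.sqrt

end sInfIcc

theorem stmt_0_general (η : ℝ) (hη : 0 < η) (ξ E ε : ℕ → ℝ)
    (hξ : ∀ k, 1 ≤ k → 0 ≤ ξ k) (hE : ∀ k, 1 ≤ k → 0 ≤ E k)
    (hsum : Summable fun k : ℕ => ε (k + 1) ^ 2)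
    (hrec : ∀ k, 1 ≤ k → η * ξ k ^ 2 ≤ (E k - E (k + 1)) + ε k ^ 2) :
    Filter.Tendsto (fun k : ℕ => Real.sqrt k * sInf (ξ '' Set.Icc 1 k))
      Filter.atTop (nhds 0) := by
  have hξsum : Summable fun t => η * ξ (t + 1) ^ 2 :=
    summable_of_le_sub_add (fun k => by positivity) hsum (fun k => sq_nonneg _)
      (fun k => hE (k + 1) (by omega)) (fun k => hrec (k + 1) (by omega))
  exact tendsto_sqrt_mul_sInf_image_Icc hξ ((summable_mul_left_iff hη.ne').mp hξsum)

/-- Lemma 1 (convergence speed of a nonnegative sequence): if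
`η̃ ξ_k² ≤ (E_k − E_{k+1}) + ε̃_k²` for all `k ≥ 1`, with all sequences nonnegative and
`Σ_{k≥1} ε̃_k² < ∞`, then `min_{1 ≤ t ≤ k} ξ_t = o(1/√k)`. -/
theorem stmt_0 (η : ℝ) (hη : 0 < η) (ξ E ε : ℕ → ℝ)
    (hξ : ∀ k, 1 ≤ k → 0 ≤ ξ k) (hE : ∀ k, 1 ≤ k → 0 ≤ E k)
    (hε : ∀ k, 1 ≤ k → 0 ≤ ε k)
    (hsum : Summable fun k : ℕ => ε (k + 1) ^ 2)
    (hrec : ∀ k, 1 ≤ k → η * ξ k ^ 2 ≤ (E k - E (k + 1)) + ε k ^ 2) :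
    Filter.Tendsto (fun k : ℕ => Real.sqrt k * sInf (ξ '' Set.Icc 1 k))
      Filter.atTop (nhds 0) :=
  stmt_0_general η hη ξ E ε hξ hE hsum hrec
end

section
/- Let f : ℝ^n → ℝ be lower semicontinuous and ρ-weakly convex, let γ ∈ (0, 1/ρ), and suppose f has the implicit Lipschitz subgradient property with constant L_f > 0. Let sequences (x^k)_{k≥1} in ℝ^n, (z^k)_{k≥0} in ℝ^n, (λ^k)_{k≥0} in ℝ^m and penalty parameters β_k > 0 satisfy, for every k ≥ 0: x^{k+1} = Prox_{γ,f}(z^k − γAᵀλ^{k+1}) and λ^{k+1} = λ^k + β_k(Ax^{k+1} − b). Then for every k ≥ 1: (i) ‖Aᵀ(λ^{k+1} − λ^k)‖ ≤ (L_f + γ⁻¹)‖x^{k+1} − x^k‖ + γ⁻¹‖z^k − z^{k−1}‖; and (ii) if moreover b lies in the column space of A and σ̃ > 0 satisfies ‖Aᵀv‖² ≥ σ̃‖v‖² for every v in the column space of A, then ‖λ^{k+1} − λ^k‖² ≤ 2 c_{γ,A}⁻¹ [ (γL_f + 1)²‖x^{k+1} − x^k‖² + ‖z^k − z^{k−1}‖²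 ], where c_{γ,A} := γ²σ̃. -/
/-!
Writing `w = z - γ • v` and `x = prox w`, the definition of the Moreau gradient
`∇M w = γ⁻¹ • (w - prox w)` can be solved for the multiplier term:
`v = γ⁻¹ • (z - x) - ∇M w`. Applied to two consecutive iterates with `v = Aᵀ λ`, the
difference `Aᵀ (λ' - λ)` is a combination of `x' - x`, `z' - z` and `∇M w' - ∇M w`, and
the implicit Lipschitz property bounds the last term by `L ‖x' - x‖`; this is (i).
For (ii), the dual update `λ' - λ = β • (A x' - b)` stays in the range of `A` when `b`
does, where `Aᵀ` is coercive, and `(p + q)² ≤ 2 (p² + q²)` finishes.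
-/

section MoreauGradient

variable {E : Type*}

noncomputable def moreauGrad [AddCommGroup E] [Module ℝ E] (γ : ℝ) (prox : E → E) (w : E) : E :=
  γ⁻¹ • (w - prox w)

theorem eq_sub_moreauGrad_of_eq_prox [AddCommGroup E] [Module ℝ E] {γ : ℝ} (hγ : γ ≠ 0)
    {prox : E → E} {x z v : E} (hx : x = prox (z - γ • v)) :
    v = γ⁻¹ • (z - x) - moreauGrad γ prox (z - γ • v) := by
  rw [moreauGrad, ← hx, ← smul_sub, sub_sub_sub_cancel_right, sub_sub_cancel,
    smul_smul, inv_mul_cancel₀ hγ, one_smul]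

theorem norm_sub_le_of_eq_prox [NormedAddCommGroup E] [NormedSpace ℝ E] {γ L : ℝ} (hγ : 0 < γ)
    {prox : E → E}
    (hlip : ∀ w w', ‖moreauGrad γ prox w - moreauGrad γ prox w'‖ ≤ L * ‖prox w - prox w'‖)
    {x x' z z' v v' : E} (hx : x = prox (z - γ • v)) (hx' : x' = prox (z' - γ • v')) :
    ‖v' - v‖ ≤ (L + γ⁻¹) * ‖x' - x‖ + γ⁻¹ * ‖z' - z‖ := by
  have hdiff : v' - v = γ⁻¹ • (z' - z) - γ⁻¹ • (x' - x)
      - (moreauGrad γ prox (z' - γ • v') - moreauGrad γ prox (z - γ • v)) := by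
    linear_combination (norm := module) eq_sub_moreauGrad_of_eq_prox hγ.ne' hx'
      - eq_sub_moreauGrad_of_eq_prox hγ.ne' hx
  have hgrad := hlip (z' - γ • v') (z - γ • v)
  rw [← hx, ← hx'] at hgrad
  have hγinv : 0 ≤ γ⁻¹ := inv_nonneg.mpr hγ.le
  calc ‖v' - v‖
      ≤ ‖γ⁻¹ • (z' - z)‖ + ‖γ⁻¹ • (x' - x)‖
        + ‖moreauGrad γ prox (z' - γ • v') - moreauGrad γ prox (z - γ • v)‖ := by
        rw [hdiff]
        exact (norm_sub_le _ _).trans (add_le_add_left (norm_sub_le _ _) _)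
    _ ≤ γ⁻¹ * ‖z' - z‖ + γ⁻¹ * ‖x' - x‖ + L * ‖x' - x‖ := by
        rw [norm_smul_of_nonneg hγinv, norm_smul_of_nonneg hγinv]
        gcongr
    _ = (L + γ⁻¹) * ‖x' - x‖ + γ⁻¹ * ‖z' - z‖ := by ring

end MoreauGradient

theorem sq_le_of_mul_sq_le_sq_of_le {σ γ L s t a c : ℝ} (hσ : 0 < σ) (hγ : 0 < γ)
    (ht : 0 ≤ t) (hst : σ * s ^ 2 ≤ t ^ 2) (hta : t ≤ (L + γ⁻¹) * a + γ⁻¹ * c) :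
    s ^ 2 ≤ 2 * (γ ^ 2 * σ)⁻¹ * ((γ * L + 1) ^ 2 * a ^ 2 + c ^ 2) := by
  have hγt : γ * t ≤ (γ * L + 1) * a + c := by
    calc γ * t ≤ γ * ((L + γ⁻¹) * a + γ⁻¹ * c) := by gcongr
      _ = (γ * L + 1) * a + c := by field_simp
  have hsq : (γ * t) ^ 2 ≤ 2 * ((γ * L + 1) ^ 2 * a ^ 2 + c ^ 2) := by
    nlinarith [mul_nonneg hγ.le ht, sq_nonneg ((γ * L + 1) * a - c)]
  have hscaled : γ ^ 2 * σ * s ^ 2 ≤ 2 * ((γ * L + 1) ^ 2 * a ^ 2 + c ^ 2) := by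
    nlinarith [mul_le_mul_of_nonneg_left hst (sq_nonneg γ)]
  calc s ^ 2 = (γ ^ 2 * σ)⁻¹ * (γ ^ 2 * σ * s ^ 2) := by field_simp
    _ ≤ (γ ^ 2 * σ)⁻¹ * (2 * ((γ * L + 1) ^ 2 * a ^ 2 + c ^ 2)) := by gcongr
    _ = 2 * (γ ^ 2 * σ)⁻¹ * ((γ * L + 1) ^ 2 * a ^ 2 + c ^ 2) := by ring

theorem stmt_2_general (n m : ℕ) (A : Matrix (Fin m) (Fin n) ℝ) (b : EuclideanSpace ℝ (Fin m))
    (γ Lf : ℝ) (hγ0 : 0 < γ)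
    (prox : EuclideanSpace ℝ (Fin n) → EuclideanSpace ℝ (Fin n))
    (hlip : ∀ w w', ‖γ⁻¹ • (w - prox w) - γ⁻¹ • (w' - prox w')‖
        ≤ Lf * ‖prox w - prox w'‖)
    (x z : ℕ → EuclideanSpace ℝ (Fin n)) (lam : ℕ → EuclideanSpace ℝ (Fin m))
    (β : ℕ → ℝ)
    (hx : ∀ k, x (k + 1) = prox (z k - γ • Matrix.toEuclideanLin A.transpose (lam (k + 1))))
    (hlam : ∀ k, lam (k + 1) = lam k + β k • (Matrix.toEuclideanLin A (x (k + 1)) - b))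
    (σ : ℝ) (hσ : 0 < σ) :
    ∀ k, 1 ≤ k →
      (‖Matrix.toEuclideanLin A.transpose (lam (k + 1) - lam k)‖
          ≤ (Lf + γ⁻¹) * ‖x (k + 1) - x k‖ + γ⁻¹ * ‖z k - z (k - 1)‖) ∧
      (b ∈ LinearMap.range (Matrix.toEuclideanLin A) →
        (∀ v ∈ LinearMap.range (Matrix.toEuclideanLin A),
          σ * ‖v‖ ^ 2 ≤ ‖Matrix.toEuclideanLin A.transpose v‖ ^ 2) →
        ‖lam (k + 1) - lam k‖ ^ 2
          ≤ 2 * (γ ^ 2 * σ)⁻¹ * ((γ * Lf + 1) ^ 2 * ‖x (k + 1) - x k‖ ^ 2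
              + ‖z k - z (k - 1)‖ ^ 2)) := by
  rintro k hk
  obtain ⟨j, rfl⟩ : ∃ j, k = j + 1 := ⟨k - 1, (Nat.sub_add_cancel hk).symm⟩
  have hdual : ‖Matrix.toEuclideanLin A.transpose (lam (j + 1 + 1) - lam (j + 1))‖
      ≤ (Lf + γ⁻¹) * ‖x (j + 1 + 1) - x (j + 1)‖ + γ⁻¹ * ‖z (j + 1) - z j‖ := by
    rw [map_sub]
    exact norm_sub_le_of_eq_prox hγ0 hlip (hx j) (hx (j + 1))
  refine ⟨hdual, fun hb hcoer => ?_⟩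
  have hstep_mem : lam (j + 1 + 1) - lam (j + 1) ∈ LinearMap.range (Matrix.toEuclideanLin A) := by
    rw [hlam, add_sub_cancel_left]
    exact Submodule.smul_mem _ _ (sub_mem (LinearMap.mem_range_self _ _) hb)
  exact sq_le_of_mul_sq_le_sq_of_le hσ hγ0 (norm_nonneg _) (hcoer _ hstep_mem) hdual

/-- Lemma 4(a) (MEAL: controlling dual by primal, implicit Lipschitz subgradient case). -/
theorem stmt_2 (n m : ℕ) (A : Matrix (Fin m) (Fin n) ℝ) (b : EuclideanSpace ℝ (Fin m))
    (f : EuclideanSpace ℝ (Fin n) → ℝ) (ρ γ Lf : ℝ)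
    (hρ : 0 < ρ) (hγ0 : 0 < γ) (hγ : γ < 1 / ρ) (hLf : 0 < Lf)
    (hlsc : LowerSemicontinuous f)
    (hwc : ConvexOn ℝ Set.univ fun x => f x + ρ / 2 * ‖x‖ ^ 2)
    (prox : EuclideanSpace ℝ (Fin n) → EuclideanSpace ℝ (Fin n))
    (hproxmin : ∀ w x, f (prox w) + 1 / (2 * γ) * ‖prox w - w‖ ^ 2
        ≤ f x + 1 / (2 * γ) * ‖x - w‖ ^ 2)
    (hproxuniq : ∀ w x, (∀ y, f x + 1 / (2 * γ) * ‖x - w‖ ^ 2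
        ≤ f y + 1 / (2 * γ) * ‖y - w‖ ^ 2) → x = prox w)
    (hlip : ∀ w w', ‖γ⁻¹ • (w - prox w) - γ⁻¹ • (w' - prox w')‖
        ≤ Lf * ‖prox w - prox w'‖)
    (x z : ℕ → EuclideanSpace ℝ (Fin n)) (lam : ℕ → EuclideanSpace ℝ (Fin m))
    (β : ℕ → ℝ) (hβ : ∀ k, 0 < β k)
    (hx : ∀ k, x (k + 1) = prox (z k - γ • Matrix.toEuclideanLin A.transpose (lam (k + 1))))
    (hlam : ∀ k, lam (k + 1) = lam k + β k • (Matrix.toEuclideanLin A (x (k + 1)) - b))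
    (σ : ℝ) (hσ : 0 < σ) :
    ∀ k, 1 ≤ k →
      (‖Matrix.toEuclideanLin A.transpose (lam (k + 1) - lam k)‖
          ≤ (Lf + γ⁻¹) * ‖x (k + 1) - x k‖ + γ⁻¹ * ‖z k - z (k - 1)‖) ∧
      (b ∈ LinearMap.range (Matrix.toEuclideanLin A) →
        (∀ v ∈ LinearMap.range (Matrix.toEuclideanLin A),
          σ * ‖v‖ ^ 2 ≤ ‖Matrix.toEuclideanLin A.transpose v‖ ^ 2) →
        ‖lam (k + 1) - lam k‖ ^ 2
          ≤ 2 * (γ ^ 2 * σ)⁻¹ * ((γ * Lf + 1) ^ 2 * ‖x (k + 1) - x k‖ ^ 2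
              + ‖z k - z (k - 1)‖ ^ 2)) :=
  stmt_2_general n m A b γ Lf hγ0 prox hlip x z lam β hx hlam σ hσ
end

section
/- Let f : ℝ^n → ℝ be lower semicontinuous and ρ-weakly convex, let γ ∈ (0, 1/ρ), and suppose f has the implicit bounded subgradient property with constant L̂_f > 0. Let sequences (x^k)_{k≥1} in ℝ^n, (z^k)_{k≥0} in ℝ^n, (λ^k)_{k≥0} in ℝ^m and penalty parameters β_k > 0 satisfy, for every k ≥ 0: x^{k+1} = Prox_{γ,f}(z^k − γAᵀλ^{k+1}) and λ^{k+1} = λ^k + β_k(Ax^{k+1} − b). Assume b lies in the column space of A and σ̃ > 0 satisfies ‖Aᵀv‖² ≥ σ̃‖v‖² for every v in the column space of A, and set c_{γ,A} := γ²σ̃. Then for every k ≥ 1: ‖λ^{k+1} − λ^k‖² ≤ 3 c_{γ,A}⁻¹ [ 4γ²L̂_f² + ‖x^{k+1} − x^k‖² + ‖z^k − z^{k−1}‖² ]. -/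
/-!
Write `wₖ := zₖ - γ Aᵀλₖ₊₁`, so that `xₖ₊₁ = Prox wₖ` and `wₖ - xₖ₊₁ = γ ∇M(wₖ)` has norm at most
`γ L̂_f`. Subtracting two consecutive such identities gives
`γ Aᵀ(λₖ₊₁ - λₖ) = (zₖ - zₖ₋₁) - (xₖ₊₁ - xₖ) - (wₖ - xₖ₊₁) + (wₖ₋₁ - xₖ)`, hence
`γ ‖Aᵀ(λₖ₊₁ - λₖ)‖ ≤ ‖zₖ - zₖ₋₁‖ + ‖xₖ₊₁ - xₖ‖ + 2γL̂_f`. Since `b ∈ range A`, the dual step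
`λₖ₊₁ - λₖ = βₖ(Axₖ₊₁ - b)` lies in `range A`, where `Aᵀ` is bounded below by `√σ̃`; squaring with
`(p + q + r)² ≤ 3(p² + q² + r²)` gives the claim.
-/

theorem add_add_sq_le_three_mul (p q r : ℝ) : (p + q + r) ^ 2 ≤ 3 * (p ^ 2 + q ^ 2 + r ^ 2) := by
  nlinarith [sq_nonneg (p - q), sq_nonneg (p - r), sq_nonneg (q - r)]

theorem norm_le_mul_of_norm_inv_smul_le {E : Type*} [SeminormedAddCommGroup E] [NormedSpace ℝ E]
    {γ L : ℝ} (hγ : 0 < γ) {v : E} (h : ‖γ⁻¹ • v‖ ≤ L) : ‖v‖ ≤ γ * L := by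
  rw [norm_smul, Real.norm_of_nonneg (inv_nonneg.mpr hγ.le), inv_mul_le_iff₀ hγ] at h
  exact h

theorem norm_smul_map_sub_le_of_eq_prox {E F : Type*} [SeminormedAddCommGroup E] [NormedSpace ℝ E]
    [AddCommGroup F] [Module ℝ F] (T : F →ₗ[ℝ] E) (prox : E → E) {γ L : ℝ} (hγ : 0 < γ)
    (hbnd : ∀ w, ‖γ⁻¹ • (w - prox w)‖ ≤ L) {x x' z z' : E} {l l' : F}
    (hx : x = prox (z - γ • T l)) (hx' : x' = prox (z' - γ • T l')) :
    γ * ‖T (l' - l)‖ ≤ ‖z' - z‖ + ‖x' - x‖ + 2 * (γ * L) := by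
  set w := z - γ • T l
  set w' := z' - γ • T l'
  have hres : ∀ v, ‖v - prox v‖ ≤ γ * L := fun v => norm_le_mul_of_norm_inv_smul_le hγ (hbnd v)
  have hidentity : γ • T (l' - l) = (z' - z) - (x' - x) - (w' - prox w') + (w - prox w) := by
    rw [hx, hx', map_sub, smul_sub]
    simp only [w, w']
    abel
  calc γ * ‖T (l' - l)‖ = ‖γ • T (l' - l)‖ := by rw [norm_smul, Real.norm_of_nonneg hγ.le]
    _ ≤ ‖z' - z‖ + ‖x' - x‖ + ‖w' - prox w'‖ + ‖w - prox w‖ := by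
        rw [hidentity]
        exact norm_add_le_of_le (norm_sub_le_of_le (norm_sub_le _ _) le_rfl) le_rfl
    _ ≤ ‖z' - z‖ + ‖x' - x‖ + 2 * (γ * L) := by linarith [hres w, hres w']

theorem stmt_3_general (n m : ℕ) (A : Matrix (Fin m) (Fin n) ℝ) (b : EuclideanSpace ℝ (Fin m))
    (γ Lfhat : ℝ) (hγ0 : 0 < γ)
    (prox : EuclideanSpace ℝ (Fin n) → EuclideanSpace ℝ (Fin n))
    (hbnd : ∀ w, ‖γ⁻¹ • (w - prox w)‖ ≤ Lfhat)
    (x z : ℕ → EuclideanSpace ℝ (Fin n)) (lam : ℕ → EuclideanSpace ℝ (Fin m))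
    (β : ℕ → ℝ)
    (hx : ∀ k, x (k + 1) = prox (z k - γ • Matrix.toEuclideanLin A.transpose (lam (k + 1))))
    (hlam : ∀ k, lam (k + 1) = lam k + β k • (Matrix.toEuclideanLin A (x (k + 1)) - b))
    (σ : ℝ) (hσ : 0 < σ)
    (hb : b ∈ LinearMap.range (Matrix.toEuclideanLin A))
    (hσA : ∀ v ∈ LinearMap.range (Matrix.toEuclideanLin A),
      σ * ‖v‖ ^ 2 ≤ ‖Matrix.toEuclideanLin A.transpose v‖ ^ 2) :
    ∀ k, 1 ≤ k →
      ‖lam (k + 1) - lam k‖ ^ 2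
        ≤ 3 * (γ ^ 2 * σ)⁻¹ * (4 * γ ^ 2 * Lfhat ^ 2 + ‖x (k + 1) - x k‖ ^ 2
            + ‖z k - z (k - 1)‖ ^ 2) := by
  rintro (_ | j) hk
  · omega
  simp only [Nat.add_sub_cancel]
  set Δ := lam (j + 1 + 1) - lam (j + 1)
  have hΔ_mem : Δ ∈ LinearMap.range (Matrix.toEuclideanLin A) := by
    rw [show Δ = β (j + 1) • (Matrix.toEuclideanLin A (x (j + 1 + 1)) - b) by
      simp only [Δ, hlam (j + 1), add_sub_cancel_left]]
    exact Submodule.smul_mem _ _ (Submodule.sub_mem _ (LinearMap.mem_range_self _ _) hb)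
  have hstep := norm_smul_map_sub_le_of_eq_prox _ prox hγ0 hbnd (hx j) (hx (j + 1))
  calc ‖Δ‖ ^ 2 = (γ ^ 2 * σ)⁻¹ * (γ ^ 2 * (σ * ‖Δ‖ ^ 2)) := by field_simp
    _ ≤ (γ ^ 2 * σ)⁻¹ * (γ * ‖Matrix.toEuclideanLin A.transpose Δ‖) ^ 2 := by
        rw [mul_pow]
        gcongr
        exact hσA Δ hΔ_mem
    _ ≤ (γ ^ 2 * σ)⁻¹ * (‖z (j + 1) - z j‖ + ‖x (j + 1 + 1) - x (j + 1)‖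
          + 2 * (γ * Lfhat)) ^ 2 := by gcongr
    _ ≤ (γ ^ 2 * σ)⁻¹ * (3 * (‖z (j + 1) - z j‖ ^ 2 + ‖x (j + 1 + 1) - x (j + 1)‖ ^ 2
          + (2 * (γ * Lfhat)) ^ 2)) := by gcongr; exact add_add_sq_le_three_mul _ _ _
    _ = _ := by ring

/-- Lemma 4(b) (MEAL: controlling dual by primal, implicit bounded subgradient case). -/
theorem stmt_3 (n m : ℕ) (A : Matrix (Fin m) (Fin n) ℝ) (b : EuclideanSpace ℝ (Fin m))
    (f : EuclideanSpace ℝ (Fin n) → ℝ) (ρ γ Lfhat : ℝ)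
    (hρ : 0 < ρ) (hγ0 : 0 < γ) (hγ : γ < 1 / ρ) (hLf : 0 < Lfhat)
    (hlsc : LowerSemicontinuous f)
    (hwc : ConvexOn ℝ Set.univ fun x => f x + ρ / 2 * ‖x‖ ^ 2)
    (prox : EuclideanSpace ℝ (Fin n) → EuclideanSpace ℝ (Fin n))
    (hproxmin : ∀ w x, f (prox w) + 1 / (2 * γ) * ‖prox w - w‖ ^ 2
        ≤ f x + 1 / (2 * γ) * ‖x - w‖ ^ 2)
    (hproxuniq : ∀ w x, (∀ y, f x + 1 / (2 * γ) * ‖x - w‖ ^ 2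
        ≤ f y + 1 / (2 * γ) * ‖y - w‖ ^ 2) → x = prox w)
    (hbnd : ∀ w, ‖γ⁻¹ • (w - prox w)‖ ≤ Lfhat)
    (x z : ℕ → EuclideanSpace ℝ (Fin n)) (lam : ℕ → EuclideanSpace ℝ (Fin m))
    (β : ℕ → ℝ) (hβ : ∀ k, 0 < β k)
    (hx : ∀ k, x (k + 1) = prox (z k - γ • Matrix.toEuclideanLin A.transpose (lam (k + 1))))
    (hlam : ∀ k, lam (k + 1) = lam k + β k • (Matrix.toEuclideanLin A (x (k + 1)) - b))
    (σ : ℝ) (hσ : 0 < σ)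
    (hb : b ∈ LinearMap.range (Matrix.toEuclideanLin A))
    (hσA : ∀ v ∈ LinearMap.range (Matrix.toEuclideanLin A),
      σ * ‖v‖ ^ 2 ≤ ‖Matrix.toEuclideanLin A.transpose v‖ ^ 2) :
    ∀ k, 1 ≤ k →
      ‖lam (k + 1) - lam k‖ ^ 2
        ≤ 3 * (γ ^ 2 * σ)⁻¹ * (4 * γ ^ 2 * Lfhat ^ 2 + ‖x (k + 1) - x k‖ ^ 2
            + ‖z k - z (k - 1)‖ ^ 2) :=
  stmt_3_general n m A b γ Lfhat hγ0 prox hbnd x z lam β hx hlam σ hσ hb hσA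
end

section
/- Let f : ℝ^n → ℝ be lower semicontinuous and ρ-weakly convex, let γ ∈ (0, 1/ρ), and suppose f has the implicit Lipschitz subgradient property with constant L_f > 0. Let sequences (x^k)_{k≥1} in ℝ^n, (z^k)_{k≥0} in ℝ^n, (λ^k)_{k≥0} in ℝ^m, vectors s^k ∈ ℝ^n with ‖s^k‖ ≤ ε_k (ε_k ≥ 0), and penalty parameters β_k > 0 satisfy, for every k ≥ 0: x^{k+1} = Prox_{γ,f}(z^k − γ(Aᵀλ^{k+1} − s^k)) and λ^{k+1} = λ^k + β_k(Ax^{k+1} − b). Assume b lies in the column space of A and σ̃ > 0 satisfies ‖Aᵀv‖² ≥ σ̃‖v‖² for every v in the column space of A, and set c_{γ,A} := γ²σ̃. Then for every k ≥ 1: ‖λ^{k+1} − λ^k‖² ≤ 3 c_{γ,A}⁻¹ [ (γL_f + 1)²‖x^{k+1} − x^k‖² + ‖z^k − z^{k−1}‖² + γ²(ε_k + ε_{k−1})² ]. -/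
/-!
Write `p = Prox_{γ,f}(w)` with `w = z - γ (u - s)`. Then `u = γ⁻¹ (z - p) + s - ∇M_{γ,f}(w)`,
so the implicit Lipschitz subgradient property bounds the change of `u = Aᵀλ` between two
consecutive iterations by the changes of `x`, `z` and `s`. Since `b ∈ range A`, the dual increment
`λ^{k+1} - λ^k = β_k (A x^{k+1} - b)` lies in `range A`, where `‖Aᵀv‖² ≥ σ̃ ‖v‖²` turns this into a
bound on `‖λ^{k+1} - λ^k‖`; the factor `3` comes from `(a + b + c)² ≤ 3 (a² + b² + c²)`.
-/

lemma add_add_sq_le (a b c : ℝ) : (a + b + c) ^ 2 ≤ 3 * (a ^ 2 + b ^ 2 + c ^ 2) := by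
  nlinarith [sq_nonneg (a - b), sq_nonneg (a - c), sq_nonneg (b - c)]

lemma norm_sub_le_of_prox_eq {E : Type*} [NormedAddCommGroup E] [NormedSpace ℝ E]
    (prox : E → E) {γ L : ℝ} (hγ : 0 < γ)
    (hlip : ∀ w w', ‖γ⁻¹ • (w - prox w) - γ⁻¹ • (w' - prox w')‖ ≤ L * ‖prox w - prox w'‖)
    (z z' u u' s s' : E) :
    ‖u - u'‖ ≤ (L + γ⁻¹) * ‖prox (z - γ • (u - s)) - prox (z' - γ • (u' - s'))‖
      + γ⁻¹ * ‖z - z'‖ + ‖s - s'‖ := by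
  set w := z - γ • (u - s)
  set w' := z' - γ • (u' - s')
  have hu : u - u' = γ⁻¹ • (z - z') - γ⁻¹ • (prox w - prox w') + (s - s')
      - (γ⁻¹ • (w - prox w) - γ⁻¹ • (w' - prox w')) := by
    simp only [w, w', smul_sub, smul_smul, inv_mul_cancel₀ hγ.ne', one_smul]
    abel
  have hnorm_smul (v : E) : ‖γ⁻¹ • v‖ = γ⁻¹ * ‖v‖ := by
    rw [norm_smul, Real.norm_of_nonneg (inv_nonneg.mpr hγ.le)]
  calc ‖u - u'‖
      ≤ ‖γ⁻¹ • (z - z')‖ + ‖γ⁻¹ • (prox w - prox w')‖ + ‖s - s'‖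
          + ‖γ⁻¹ • (w - prox w) - γ⁻¹ • (w' - prox w')‖ := by
        rw [hu]
        refine (norm_sub_le _ _).trans (add_le_add_left ((norm_add_le _ _).trans ?_) _)
        exact add_le_add_left (norm_sub_le _ _) _
    _ ≤ γ⁻¹ * ‖z - z'‖ + γ⁻¹ * ‖prox w - prox w'‖ + ‖s - s'‖ + L * ‖prox w - prox w'‖ := by
        rw [hnorm_smul, hnorm_smul]
        exact add_le_add_right (hlip w w') _
    _ = (L + γ⁻¹) * ‖prox w - prox w'‖ + γ⁻¹ * ‖z - z'‖ + ‖s - s'‖ := by ring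

lemma sq_le_of_mul_sq_le_sq_of_le_add_add {v N a b c σ : ℝ} (hσ : 0 < σ)
    (hv : σ * v ^ 2 ≤ N ^ 2) (hN₀ : 0 ≤ N) (hN : N ≤ a + b + c) :
    v ^ 2 ≤ 3 * σ⁻¹ * (a ^ 2 + b ^ 2 + c ^ 2) := by
  have hN2 : N ^ 2 ≤ 3 * (a ^ 2 + b ^ 2 + c ^ 2) :=
    (pow_le_pow_left₀ hN₀ hN 2).trans (add_add_sq_le a b c)
  rw [mul_comm 3, mul_assoc, le_inv_mul_iff₀ hσ]
  exact hv.trans hN2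

theorem stmt_4_general (n m : ℕ) (A : Matrix (Fin m) (Fin n) ℝ) (b : EuclideanSpace ℝ (Fin m))
    (γ Lf : ℝ)
    (hγ0 : 0 < γ)
    (prox : EuclideanSpace ℝ (Fin n) → EuclideanSpace ℝ (Fin n))
    (hlip : ∀ w w', ‖γ⁻¹ • (w - prox w) - γ⁻¹ • (w' - prox w')‖
        ≤ Lf * ‖prox w - prox w'‖)
    (x z : ℕ → EuclideanSpace ℝ (Fin n)) (lam : ℕ → EuclideanSpace ℝ (Fin m))
    (s : ℕ → EuclideanSpace ℝ (Fin n)) (ε : ℕ → ℝ)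
    (hs : ∀ k, ‖s k‖ ≤ ε k)
    (β : ℕ → ℝ)
    (hx : ∀ k, x (k + 1)
        = prox (z k - γ • (Matrix.toEuclideanLin A.transpose (lam (k + 1)) - s k)))
    (hlam : ∀ k, lam (k + 1) = lam k + β k • (Matrix.toEuclideanLin A (x (k + 1)) - b))
    (σ : ℝ) (hσ : 0 < σ)
    (hb : b ∈ LinearMap.range (Matrix.toEuclideanLin A))
    (hσA : ∀ v ∈ LinearMap.range (Matrix.toEuclideanLin A),
      σ * ‖v‖ ^ 2 ≤ ‖Matrix.toEuclideanLin A.transpose v‖ ^ 2) :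
    ∀ k, 1 ≤ k →
      ‖lam (k + 1) - lam k‖ ^ 2
        ≤ 3 * (γ ^ 2 * σ)⁻¹ * ((γ * Lf + 1) ^ 2 * ‖x (k + 1) - x k‖ ^ 2
            + ‖z k - z (k - 1)‖ ^ 2 + γ ^ 2 * (ε k + ε (k - 1)) ^ 2) := by
  intro k hk
  obtain ⟨j, rfl⟩ := Nat.exists_eq_add_of_le' hk
  rw [Nat.add_sub_cancel]
  set T := Matrix.toEuclideanLin A.transpose
  have hdual : ‖T (lam (j + 1 + 1)) - T (lam (j + 1))‖
      ≤ (Lf + γ⁻¹) * ‖x (j + 1 + 1) - x (j + 1)‖ + γ⁻¹ * ‖z (j + 1) - z j‖ + (ε (j + 1) + ε j) := by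
    have h := norm_sub_le_of_prox_eq prox hγ0 hlip (z (j + 1)) (z j) (T (lam (j + 1 + 1)))
      (T (lam (j + 1))) (s (j + 1)) (s j)
    rw [← hx, ← hx] at h
    exact h.trans (add_le_add_right ((norm_sub_le _ _).trans (add_le_add (hs _) (hs _))) _)
  have hmem : lam (j + 1 + 1) - lam (j + 1) ∈ LinearMap.range (Matrix.toEuclideanLin A) := by
    rw [hlam, add_sub_cancel_left]
    exact Submodule.smul_mem _ _ (Submodule.sub_mem _ (LinearMap.mem_range_self _ _) hb)
  have hσT := hσA _ hmem
  rw [map_sub] at hσT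
  refine (sq_le_of_mul_sq_le_sq_of_le_add_add hσ hσT (norm_nonneg _) hdual).trans_eq ?_
  field_simp

/-- Lemma 5(a) (iMEAL: controlling dual by primal, implicit Lipschitz subgradient case). -/
theorem stmt_4 (n m : ℕ) (A : Matrix (Fin m) (Fin n) ℝ) (b : EuclideanSpace ℝ (Fin m))
    (f : EuclideanSpace ℝ (Fin n) → ℝ) (ρ γ Lf : ℝ)
    (hρ : 0 < ρ) (hγ0 : 0 < γ) (hγ : γ < 1 / ρ) (hLf : 0 < Lf)
    (hlsc : LowerSemicontinuous f)
    (hwc : ConvexOn ℝ Set.univ fun x => f x + ρ / 2 * ‖x‖ ^ 2)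
    (prox : EuclideanSpace ℝ (Fin n) → EuclideanSpace ℝ (Fin n))
    (hproxmin : ∀ w x, f (prox w) + 1 / (2 * γ) * ‖prox w - w‖ ^ 2
        ≤ f x + 1 / (2 * γ) * ‖x - w‖ ^ 2)
    (hproxuniq : ∀ w x, (∀ y, f x + 1 / (2 * γ) * ‖x - w‖ ^ 2
        ≤ f y + 1 / (2 * γ) * ‖y - w‖ ^ 2) → x = prox w)
    (hlip : ∀ w w', ‖γ⁻¹ • (w - prox w) - γ⁻¹ • (w' - prox w')‖
        ≤ Lf * ‖prox w - prox w'‖)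
    (x z : ℕ → EuclideanSpace ℝ (Fin n)) (lam : ℕ → EuclideanSpace ℝ (Fin m))
    (s : ℕ → EuclideanSpace ℝ (Fin n)) (ε : ℕ → ℝ)
    (hε : ∀ k, 0 ≤ ε k) (hs : ∀ k, ‖s k‖ ≤ ε k)
    (β : ℕ → ℝ) (hβ : ∀ k, 0 < β k)
    (hx : ∀ k, x (k + 1)
        = prox (z k - γ • (Matrix.toEuclideanLin A.transpose (lam (k + 1)) - s k)))
    (hlam : ∀ k, lam (k + 1) = lam k + β k • (Matrix.toEuclideanLin A (x (k + 1)) - b))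
    (σ : ℝ) (hσ : 0 < σ)
    (hb : b ∈ LinearMap.range (Matrix.toEuclideanLin A))
    (hσA : ∀ v ∈ LinearMap.range (Matrix.toEuclideanLin A),
      σ * ‖v‖ ^ 2 ≤ ‖Matrix.toEuclideanLin A.transpose v‖ ^ 2) :
    ∀ k, 1 ≤ k →
      ‖lam (k + 1) - lam k‖ ^ 2
        ≤ 3 * (γ ^ 2 * σ)⁻¹ * ((γ * Lf + 1) ^ 2 * ‖x (k + 1) - x k‖ ^ 2
            + ‖z k - z (k - 1)‖ ^ 2 + γ ^ 2 * (ε k + ε (k - 1)) ^ 2) :=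
  stmt_4_general n m A b γ Lf hγ0 prox hlip x z lam s ε hs β hx hlam σ hσ hb hσA
end

section
/- Let h : ℝ^n → ℝ be differentiable with L_h-Lipschitz gradient ∇h, let g : ℝ^n → ℝ be lower semicontinuous and ρ_g-weakly convex, let γ ∈ (0, 1/ρ_g), and suppose g has the implicit Lipschitz subgradient property with constant L_g > 0. Let sequences (x^k)_{k≥0} in ℝ^n, (z^k)_{k≥0} in ℝ^n, (λ^k)_{k≥0} in ℝ^m and penalty parameters β_k > 0 satisfy, for every k ≥ 0: x^{k+1} = Prox_{γ,g}(z^k − γ(∇h(x^k) + Aᵀλ^{k+1})) and λ^{k+1} = λ^k + β_k(Ax^{k+1} − b). Then for every k ≥ 1: (i) ‖Aᵀ(λ^{k+1} − λ^k)‖ ≤ (L_g + γ⁻¹)‖x^{k+1} − x^k‖ + L_h‖x^k − x^{k−1}‖ + γ⁻¹‖z^k − z^{k−1}‖; and (ii) if moreover b lies in the column space of A and σ̃ > 0 satisfies ‖Aᵀv‖² ≥ σ̃‖v‖² for every v in the column space of A, then ‖λ^{k+1} − λ^k‖² ≤ 3 c_{γ,A}⁻¹ [ (γL_g + 1)²‖x^{k+1}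 − x^k‖² + γ²L_h²‖x^k − x^{k−1}‖² + ‖z^k − z^{k−1}‖² ], where c_{γ,A} := γ²σ̃. -/
/-!
Write `w = z - γ (∇h(x) + Aᵀλ)` for the argument of the prox step producing `x⁺ = Prox(w)`.
Then `Aᵀλ = γ⁻¹ (z - x⁺) - ∇h(x) - ∇M(w)`, so the change of `Aᵀλ` between two consecutive
iterations is controlled by the changes of `z`, of `x⁺`, of `∇h(x)` and of `∇M(w)`; the last
is at most `L_g ‖x⁺ - x⁺₀‖` by the implicit Lipschitz subgradient property. For (ii), the
dual increment `β (Ax - b)` lies in the range of `A`, where `‖Aᵀv‖² ≥ σ ‖v‖²`, and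
`(p + q + r)² ≤ 3 (p² + q² + r²)`.
-/

section ProxStep

variable {E : Type*} [NormedAddCommGroup E] [NormedSpace ℝ E]

lemma eq_sub_smul_sub_prox {γ : ℝ} (hγ : γ ≠ 0) (prox : E → E) (z d y : E) :
    y = γ⁻¹ • (z - prox (z - γ • (d + y))) - d
      - γ⁻¹ • (z - γ • (d + y) - prox (z - γ • (d + y))) := by
  rw [sub_right_comm, ← smul_sub, sub_sub_sub_cancel_right, sub_sub_cancel, inv_smul_smul₀ hγ]
  abel

lemma norm_sub_le_of_prox_step {γ Lg : ℝ} (hγ : 0 < γ) (prox : E → E)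
    (hlip : ∀ w w', ‖γ⁻¹ • (w - prox w) - γ⁻¹ • (w' - prox w')‖ ≤ Lg * ‖prox w - prox w'‖)
    (z z₀ d d₀ y y₀ : E) :
    ‖y - y₀‖ ≤ (Lg + γ⁻¹) * ‖prox (z - γ • (d + y)) - prox (z₀ - γ • (d₀ + y₀))‖
      + ‖d - d₀‖ + γ⁻¹ * ‖z - z₀‖ := by
  have hy := eq_sub_smul_sub_prox hγ.ne' prox z d y
  have hy₀ := eq_sub_smul_sub_prox hγ.ne' prox z₀ d₀ y₀
  set w := z - γ • (d + y)
  set w₀ := z₀ - γ • (d₀ + y₀)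
  have hdiff : y - y₀ = γ⁻¹ • (z - z₀) - γ⁻¹ • (prox w - prox w₀) - (d - d₀)
      - (γ⁻¹ • (w - prox w) - γ⁻¹ • (w₀ - prox w₀)) := by
    conv_lhs => rw [hy, hy₀]
    simp only [smul_sub]
    abel
  have hγinv : 0 ≤ γ⁻¹ := inv_nonneg.mpr hγ.le
  calc ‖y - y₀‖
      ≤ ‖γ⁻¹ • (z - z₀)‖ + ‖γ⁻¹ • (prox w - prox w₀)‖ + ‖d - d₀‖
          + ‖γ⁻¹ • (w - prox w) - γ⁻¹ • (w₀ - prox w₀)‖ := by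
        rw [hdiff]
        linarith [norm_sub_le (γ⁻¹ • (z - z₀) - γ⁻¹ • (prox w - prox w₀) - (d - d₀))
            (γ⁻¹ • (w - prox w) - γ⁻¹ • (w₀ - prox w₀)),
          norm_sub_le (γ⁻¹ • (z - z₀) - γ⁻¹ • (prox w - prox w₀)) (d - d₀),
          norm_sub_le (γ⁻¹ • (z - z₀)) (γ⁻¹ • (prox w - prox w₀))]
    _ = γ⁻¹ * ‖z - z₀‖ + γ⁻¹ * ‖prox w - prox w₀‖ + ‖d - d₀‖
          + ‖γ⁻¹ • (w - prox w) - γ⁻¹ • (w₀ - prox w₀)‖ := by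
        rw [norm_smul, norm_smul, Real.norm_of_nonneg hγinv]
    _ ≤ (Lg + γ⁻¹) * ‖prox w - prox w₀‖ + ‖d - d₀‖ + γ⁻¹ * ‖z - z₀‖ := by
        linarith [hlip w w₀]

end ProxStep

lemma le_three_mul_inv_mul_of_mul_le_sq {σ t p q r : ℝ} (hσ : 0 < σ)
    (ht : σ * t ≤ (p + q + r) ^ 2) :
    t ≤ 3 * σ⁻¹ * (p ^ 2 + q ^ 2 + r ^ 2) := by
  rw [mul_comm 3, mul_assoc, le_inv_mul_iff₀ hσ]
  nlinarith [sq_nonneg (p - q), sq_nonneg (p - r), sq_nonneg (q - r)]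

theorem stmt_6_general (n m : ℕ) (A : Matrix (Fin m) (Fin n) ℝ) (b : EuclideanSpace ℝ (Fin m))
    (h' : EuclideanSpace ℝ (Fin n) → EuclideanSpace ℝ (Fin n))
    (γ Lh Lg : ℝ)
    (hγ0 : 0 < γ)
    (hLh : ∀ x y, ‖h' x - h' y‖ ≤ Lh * ‖x - y‖)
    (prox : EuclideanSpace ℝ (Fin n) → EuclideanSpace ℝ (Fin n))
    (hlip : ∀ w w', ‖γ⁻¹ • (w - prox w) - γ⁻¹ • (w' - prox w')‖
        ≤ Lg * ‖prox w - prox w'‖)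
    (x z : ℕ → EuclideanSpace ℝ (Fin n)) (lam : ℕ → EuclideanSpace ℝ (Fin m))
    (β : ℕ → ℝ)
    (hx : ∀ k, x (k + 1)
        = prox (z k - γ • (h' (x k) + Matrix.toEuclideanLin A.transpose (lam (k + 1)))))
    (hlam : ∀ k, lam (k + 1) = lam k + β k • (Matrix.toEuclideanLin A (x (k + 1)) - b))
    (σ : ℝ) (hσ : 0 < σ) :
    ∀ k, 1 ≤ k →
      (‖Matrix.toEuclideanLin A.transpose (lam (k + 1) - lam k)‖
          ≤ (Lg + γ⁻¹) * ‖x (k + 1) - x k‖ + Lh * ‖x k - x (k - 1)‖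
            + γ⁻¹ * ‖z k - z (k - 1)‖) ∧
      (b ∈ LinearMap.range (Matrix.toEuclideanLin A) →
        (∀ v ∈ LinearMap.range (Matrix.toEuclideanLin A),
          σ * ‖v‖ ^ 2 ≤ ‖Matrix.toEuclideanLin A.transpose v‖ ^ 2) →
        ‖lam (k + 1) - lam k‖ ^ 2
          ≤ 3 * (γ ^ 2 * σ)⁻¹ * ((γ * Lg + 1) ^ 2 * ‖x (k + 1) - x k‖ ^ 2
              + γ ^ 2 * Lh ^ 2 * ‖x k - x (k - 1)‖ ^ 2
              + ‖z k - z (k - 1)‖ ^ 2)) := by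
  rintro k hk
  obtain ⟨j, rfl⟩ := Nat.exists_eq_add_of_le' hk
  simp only [Nat.add_sub_cancel]
  have hdual : ‖Matrix.toEuclideanLin A.transpose (lam (j + 1 + 1) - lam (j + 1))‖
      ≤ (Lg + γ⁻¹) * ‖x (j + 1 + 1) - x (j + 1)‖ + Lh * ‖x (j + 1) - x j‖
        + γ⁻¹ * ‖z (j + 1) - z j‖ := by
    have hstep := norm_sub_le_of_prox_step hγ0 prox hlip (z (j + 1)) (z j)
      (h' (x (j + 1))) (h' (x j))
      (Matrix.toEuclideanLin A.transpose (lam (j + 1 + 1)))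
      (Matrix.toEuclideanLin A.transpose (lam (j + 1)))
    rw [← hx, ← hx] at hstep
    rw [map_sub]
    linarith [hLh (x (j + 1)) (x j)]
  refine ⟨hdual, fun ⟨u, hu⟩ hσA => ?_⟩
  have hrange : lam (j + 1 + 1) - lam (j + 1) ∈ LinearMap.range (Matrix.toEuclideanLin A) := by
    rw [hlam, add_sub_cancel_left, ← hu, ← map_sub]
    exact Submodule.smul_mem _ _ (LinearMap.mem_range_self _ _)
  refine (le_three_mul_inv_mul_of_mul_le_sq hσ ((hσA _ hrange).trans
    (pow_le_pow_left₀ (norm_nonneg _) hdual 2))).trans_eq ?_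
  field_simp

/-- Lemma 6(a) (LiMEAL: controlling dual by primal, implicit Lipschitz subgradient case). -/
theorem stmt_6 (n m : ℕ) (A : Matrix (Fin m) (Fin n) ℝ) (b : EuclideanSpace ℝ (Fin m))
    (h : EuclideanSpace ℝ (Fin n) → ℝ) (h' : EuclideanSpace ℝ (Fin n) → EuclideanSpace ℝ (Fin n))
    (g : EuclideanSpace ℝ (Fin n) → ℝ) (ρg γ Lh Lg : ℝ)
    (hρg : 0 < ρg) (hγ0 : 0 < γ) (hγ : γ < 1 / ρg) (hLg : 0 < Lg)
    (hh' : ∀ x, HasGradientAt h (h' x) x)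
    (hLh : ∀ x y, ‖h' x - h' y‖ ≤ Lh * ‖x - y‖)
    (hlsc : LowerSemicontinuous g)
    (hwc : ConvexOn ℝ Set.univ fun x => g x + ρg / 2 * ‖x‖ ^ 2)
    (prox : EuclideanSpace ℝ (Fin n) → EuclideanSpace ℝ (Fin n))
    (hproxmin : ∀ w x, g (prox w) + 1 / (2 * γ) * ‖prox w - w‖ ^ 2
        ≤ g x + 1 / (2 * γ) * ‖x - w‖ ^ 2)
    (hproxuniq : ∀ w x, (∀ y, g x + 1 / (2 * γ) * ‖x - w‖ ^ 2
        ≤ g y + 1 / (2 * γ) * ‖y - w‖ ^ 2) → x = prox w)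
    (hlip : ∀ w w', ‖γ⁻¹ • (w - prox w) - γ⁻¹ • (w' - prox w')‖
        ≤ Lg * ‖prox w - prox w'‖)
    (x z : ℕ → EuclideanSpace ℝ (Fin n)) (lam : ℕ → EuclideanSpace ℝ (Fin m))
    (β : ℕ → ℝ) (hβ : ∀ k, 0 < β k)
    (hx : ∀ k, x (k + 1)
        = prox (z k - γ • (h' (x k) + Matrix.toEuclideanLin A.transpose (lam (k + 1)))))
    (hlam : ∀ k, lam (k + 1) = lam k + β k • (Matrix.toEuclideanLin A (x (k + 1)) - b))
    (σ : ℝ) (hσ : 0 < σ) :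
    ∀ k, 1 ≤ k →
      (‖Matrix.toEuclideanLin A.transpose (lam (k + 1) - lam k)‖
          ≤ (Lg + γ⁻¹) * ‖x (k + 1) - x k‖ + Lh * ‖x k - x (k - 1)‖
            + γ⁻¹ * ‖z k - z (k - 1)‖) ∧
      (b ∈ LinearMap.range (Matrix.toEuclideanLin A) →
        (∀ v ∈ LinearMap.range (Matrix.toEuclideanLin A),
          σ * ‖v‖ ^ 2 ≤ ‖Matrix.toEuclideanLin A.transpose v‖ ^ 2) →
        ‖lam (k + 1) - lam k‖ ^ 2
          ≤ 3 * (γ ^ 2 * σ)⁻¹ * ((γ * Lg + 1) ^ 2 * ‖x (k + 1) - x k‖ ^ 2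
              + γ ^ 2 * Lh ^ 2 * ‖x k - x (k - 1)‖ ^ 2
              + ‖z k - z (k - 1)‖ ^ 2)) :=
  stmt_6_general n m A b h' γ Lh Lg hγ0 hLh prox hlip x z lam β hx hlam σ hσ
end

section
/- Let f : ℝ^n → ℝ be lower semicontinuous and ρ-weakly convex, γ ∈ (0, 1/ρ), η ∈ (0, 2), and β_k > 0. Let sequences (x^k)_{k≥0}, (z^k)_{k≥0} in ℝ^n and (λ^k)_{k≥0} in ℝ^m satisfy, for every k ≥ 0: x^{k+1} is a global minimizer of x ↦ P_{β_k}(x, z^k, λ^k); z^{k+1} = z^k − η(z^k − x^{k+1}); λ^{k+1} = λ^k + β_k(Ax^{k+1} − b). Then for every k ≥ 0: P_{β_k}(x^k, z^k, λ^k) − P_{β_{k+1}}(x^{k+1}, z^{k+1}, λ^{k+1}) ≥ ((1 − γρ)/(2γ))‖x^{k+1} − x^k‖² + (1/(4γ))(2/η − 1)‖z^{k+1} − z^k‖² + (γη(2 − η)/4)·Φ_k² − ((β_k + β_{k+1} + γη(1 − η/2))/(2β_k²))‖λ^{k+1} − λ^k‖², where Φ_k² := (ηγ)⁻²‖z^k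 − z^{k+1}‖² + β_k⁻²‖λ^{k+1} − λ^k‖². -/
/-!
Since `f + (ρ/2)‖·‖²` is convex, `x ↦ P_β(x, z, λ)` is `(1/γ − ρ)`-strongly convex, so its
minimizer `x^{k+1}` satisfies `P(x^k) − P(x^{k+1}) ≥ ((1/γ − ρ)/2)‖x^{k+1} − x^k‖²`. The passage
from `(β_k, z^k, λ^k)` to `(β_{k+1}, z^{k+1}, λ^{k+1})` at the fixed point `x^{k+1}` changes `P`
by an explicit quantity, because `x^{k+1} − z^{k+1} = (1 − η)(x^{k+1} − z^k)` and
`λ^{k+1} − λ^k = β_k (Ax^{k+1} − b)`. Rewriting `‖x^{k+1} − z^k‖` and `‖Ax^{k+1} − b‖` through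
`‖z^{k+1} − z^k‖` and `‖λ^{k+1} − λ^k‖` turns the sum of the two estimates into the claim.
-/

open scoped RealInnerProductSpace

/-- `P_β(x, z, λ) = f(x) + ⟨λ, Ax − b⟩ + (β/2)‖Ax − b‖² + (1/(2γ))‖x − z‖²`. -/
noncomputable def Pfun {n m : ℕ} (f : EuclideanSpace ℝ (Fin n) → ℝ)
    (A : Matrix (Fin m) (Fin n) ℝ) (b : EuclideanSpace ℝ (Fin m)) (γ β : ℝ)
    (x z : EuclideanSpace ℝ (Fin n)) (lam : EuclideanSpace ℝ (Fin m)) : ℝ :=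
  f x + ⟪lam, Matrix.toEuclideanLin A x - b⟫
    + β / 2 * ‖Matrix.toEuclideanLin A x - b‖ ^ 2 + 1 / (2 * γ) * ‖x - z‖ ^ 2

open Set Filter Topology

theorem UniformConvexOn.le_sub_of_isMinOn {E : Type*} [NormedAddCommGroup E] [NormedSpace ℝ E]
    {s : Set E} {φ : ℝ → ℝ} {f : E → ℝ} {x y : E} (hf : UniformConvexOn s φ f)
    (hmin : IsMinOn f s x) (hx : x ∈ s) (hy : y ∈ s) : φ ‖x - y‖ ≤ f y - f x := by
  have hstep : ∀ t ∈ Ioc (0 : ℝ) 1, (1 - t) * φ ‖x - y‖ ≤ f y - f x := by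
    rintro t ⟨ht0, ht1⟩
    have hconv := hf.2 hx hy (sub_nonneg.2 ht1) ht0.le (sub_add_cancel 1 t)
    have hle : f x ≤ f ((1 - t) • x + t • y) :=
      hmin (hf.1 hx hy (sub_nonneg.2 ht1) ht0.le (sub_add_cancel 1 t))
    simp only [smul_eq_mul] at hconv
    have : t * ((1 - t) * φ ‖x - y‖) ≤ t * (f y - f x) := by linarith
    exact le_of_mul_le_mul_left this ht0
  have hlim : Tendsto (fun t : ℝ => (1 - t) * φ ‖x - y‖) (𝓝[>] 0) (𝓝 (φ ‖x - y‖)) := by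
    have : Tendsto (fun t : ℝ => (1 - t) * φ ‖x - y‖) (𝓝 0) (𝓝 ((1 - 0) * φ ‖x - y‖)) :=
      ((continuous_const.sub continuous_id).mul continuous_const).tendsto 0
    simpa using this.mono_left nhdsWithin_le_nhds
  exact le_of_tendsto hlim (eventually_of_mem (Ioc_mem_nhdsGT one_pos) hstep)

theorem convexOn_norm_map_sub_sq {E F : Type*} [NormedAddCommGroup E] [NormedSpace ℝ E]
    [NormedAddCommGroup F] [NormedSpace ℝ F] (T : E →ₗ[ℝ] F) (c : F) :
    ConvexOn ℝ univ fun x => ‖T x - c‖ ^ 2 := by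
  have hsq : ConvexOn ℝ univ fun v : F => ‖v‖ ^ 2 :=
    (convexOn_norm convex_univ).pow (fun _ _ => norm_nonneg _) 2
  exact ((hsq.translate_right (-c)).comp_linearMap T).congr fun x _ => by
    simp only [Function.comp_apply, neg_add_eq_sub]

section Pfun

variable {n m : ℕ} {f : EuclideanSpace ℝ (Fin n) → ℝ} {A : Matrix (Fin m) (Fin n) ℝ}
  {b : EuclideanSpace ℝ (Fin m)} {ρ γ β : ℝ}

theorem strongConvexOn_Pfun (hwc : ConvexOn ℝ univ fun x => f x + ρ / 2 * ‖x‖ ^ 2) (hβ : 0 ≤ β)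
    (z : EuclideanSpace ℝ (Fin n)) (lam : EuclideanSpace ℝ (Fin m)) :
    StrongConvexOn univ (1 / γ - ρ) fun x => Pfun f A b γ β x z lam := by
  set T := Matrix.toEuclideanLin A
  -- `‖x − z‖² − ‖x‖²` is affine in `x`, so `P − ((1/γ − ρ)/2)‖·‖²` is
  -- `(f + (ρ/2)‖·‖²) + (β/2)‖T · − b‖² + ℓ + const` with `ℓ` linear.
  let ℓ : EuclideanSpace ℝ (Fin n) →ₗ[ℝ] ℝ := (innerₛₗ ℝ lam).comp T - (1 / γ) • innerₛₗ ℝ z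
  have hpenalty := (convexOn_norm_map_sub_sq T b).smul (by positivity : (0 : ℝ) ≤ β / 2)
  have hconv := (hwc.add hpenalty).add
    ((ℓ.convexOn convex_univ).add_const (1 / (2 * γ) * ‖z‖ ^ 2 - ⟪lam, b⟫))
  rw [strongConvexOn_iff_convex]
  refine hconv.congr fun x _ => ?_
  simp only [Pfun, ℓ, Pi.add_apply, LinearMap.sub_apply, LinearMap.comp_apply,
    LinearMap.smul_apply, innerₛₗ_apply_apply, smul_eq_mul, inner_sub_right, norm_sub_sq_real,
    real_inner_comm x z]
  ring

theorem Pfun_sub_Pfun_of_update {η β' : ℝ} {x z z' : EuclideanSpace ℝ (Fin n)}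
    {lam lam' : EuclideanSpace ℝ (Fin m)} (hz : z' = z - η • (z - x))
    (hlam : lam' = lam + β • (Matrix.toEuclideanLin A x - b)) :
    Pfun f A b γ β x z lam - Pfun f A b γ β' x z' lam'
      = (2 * η - η ^ 2) / (2 * γ) * ‖x - z‖ ^ 2
        - (β + β') / 2 * ‖Matrix.toEuclideanLin A x - b‖ ^ 2 := by
  have hxz' : x - z' = (1 - η) • (x - z) := by rw [hz]; module
  rw [Pfun, Pfun, hxz', hlam, norm_smul, mul_pow, Real.norm_eq_abs, sq_abs, inner_add_left,
    real_inner_smul_left, real_inner_self_eq_norm_sq]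
  ring

end Pfun

theorem stmt_8_general (n m : ℕ) (A : Matrix (Fin m) (Fin n) ℝ) (b : EuclideanSpace ℝ (Fin m))
    (f : EuclideanSpace ℝ (Fin n) → ℝ) (ρ γ η : ℝ)
    (hγ0 : 0 < γ) (hη0 : 0 < η)
    (hwc : ConvexOn ℝ Set.univ fun x => f x + ρ / 2 * ‖x‖ ^ 2)
    (x z : ℕ → EuclideanSpace ℝ (Fin n)) (lam : ℕ → EuclideanSpace ℝ (Fin m))
    (β : ℕ → ℝ) (hβ : ∀ k, 0 < β k)
    (hxmin : ∀ k x', Pfun f A b γ (β k) (x (k + 1)) (z k) (lam k)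
        ≤ Pfun f A b γ (β k) x' (z k) (lam k))
    (hz : ∀ k, z (k + 1) = z k - η • (z k - x (k + 1)))
    (hlam : ∀ k, lam (k + 1) = lam k + β k • (Matrix.toEuclideanLin A (x (k + 1)) - b)) :
    ∀ k : ℕ,
      Pfun f A b γ (β k) (x k) (z k) (lam k)
          - Pfun f A b γ (β (k + 1)) (x (k + 1)) (z (k + 1)) (lam (k + 1))
        ≥ (1 - γ * ρ) / (2 * γ) * ‖x (k + 1) - x k‖ ^ 2
          + 1 / (4 * γ) * (2 / η - 1) * ‖z (k + 1) - z k‖ ^ 2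
          + γ * η * (2 - η) / 4 *
            (((η * γ) ^ 2)⁻¹ * ‖z k - z (k + 1)‖ ^ 2
              + (β k ^ 2)⁻¹ * ‖lam (k + 1) - lam k‖ ^ 2)
          - (β k + β (k + 1) + γ * η * (1 - η / 2)) / (2 * β k ^ 2)
              * ‖lam (k + 1) - lam k‖ ^ 2 := by
  intro k
  have hdescent : (1 / γ - ρ) / 2 * ‖x (k + 1) - x k‖ ^ 2
      ≤ Pfun f A b γ (β k) (x k) (z k) (lam k) - Pfun f A b γ (β k) (x (k + 1)) (z k) (lam k) :=
    (strongConvexOn_Pfun hwc (hβ k).le (z k) (lam k)).le_sub_of_isMinOn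
      (isMinOn_univ_iff.2 (hxmin k)) (mem_univ _) (mem_univ _)
  have hdual := Pfun_sub_Pfun_of_update (f := f) (γ := γ) (β' := β (k + 1)) (hz k) (hlam k)
  have hz_step : z (k + 1) - z k = η • (x (k + 1) - z k) := by rw [hz k]; module
  have hlam_step : lam (k + 1) - lam k = β k • (Matrix.toEuclideanLin A (x (k + 1)) - b) := by
    rw [hlam k, add_sub_cancel_left]
  rw [ge_iff_le, norm_sub_rev (z k), hz_step, hlam_step, norm_smul, norm_smul,
    Real.norm_of_nonneg hη0.le, Real.norm_of_nonneg (hβ k).le]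
  calc _ = (1 / γ - ρ) / 2 * ‖x (k + 1) - x k‖ ^ 2
          + ((2 * η - η ^ 2) / (2 * γ) * ‖x (k + 1) - z k‖ ^ 2
            - (β k + β (k + 1)) / 2 * ‖Matrix.toEuclideanLin A (x (k + 1)) - b‖ ^ 2) := by
        field_simp [hγ0.ne', hη0.ne', (hβ k).ne']
        ring
    _ ≤ _ := by linarith

/-- Lemma 7 (MEAL: one-step progress). -/
theorem stmt_8 (n m : ℕ) (A : Matrix (Fin m) (Fin n) ℝ) (b : EuclideanSpace ℝ (Fin m))
    (f : EuclideanSpace ℝ (Fin n) → ℝ) (ρ γ η : ℝ)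
    (hρ : 0 < ρ) (hγ0 : 0 < γ) (hγ : γ < 1 / ρ) (hη0 : 0 < η) (hη2 : η < 2)
    (hlsc : LowerSemicontinuous f)
    (hwc : ConvexOn ℝ Set.univ fun x => f x + ρ / 2 * ‖x‖ ^ 2)
    (x z : ℕ → EuclideanSpace ℝ (Fin n)) (lam : ℕ → EuclideanSpace ℝ (Fin m))
    (β : ℕ → ℝ) (hβ : ∀ k, 0 < β k)
    (hxmin : ∀ k x', Pfun f A b γ (β k) (x (k + 1)) (z k) (lam k)
        ≤ Pfun f A b γ (β k) x' (z k) (lam k))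
    (hz : ∀ k, z (k + 1) = z k - η • (z k - x (k + 1)))
    (hlam : ∀ k, lam (k + 1) = lam k + β k • (Matrix.toEuclideanLin A (x (k + 1)) - b)) :
    ∀ k : ℕ,
      Pfun f A b γ (β k) (x k) (z k) (lam k)
          - Pfun f A b γ (β (k + 1)) (x (k + 1)) (z (k + 1)) (lam (k + 1))
        ≥ (1 - γ * ρ) / (2 * γ) * ‖x (k + 1) - x k‖ ^ 2
          + 1 / (4 * γ) * (2 / η - 1) * ‖z (k + 1) - z k‖ ^ 2
          + γ * η * (2 - η) / 4 *
            (((η * γ) ^ 2)⁻¹ * ‖z k - z (k + 1)‖ ^ 2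
              + (β k ^ 2)⁻¹ * ‖lam (k + 1) - lam k‖ ^ 2)
          - (β k + β (k + 1) + γ * η * (1 - η / 2)) / (2 * β k ^ 2)
              * ‖lam (k + 1) - lam k‖ ^ 2 :=
  stmt_8_general n m A b f ρ γ η hγ0 hη0 hwc x z lam β hβ hxmin hz hlam
end

section
/- Let f : ℝ^n → ℝ be lower semicontinuous and ρ-weakly convex, γ ∈ (0, 1/ρ), η ∈ (0, 2), and β_k > 0. Let sequences (x^k)_{k≥0}, (z^k)_{k≥0} in ℝ^n, (λ^k)_{k≥0} in ℝ^m, and vectors s^k ∈ ℝ^n satisfy, for every k ≥ 0: P_{β_k}(x^k, z^k, λ^k) ≥ P_{β_k}(x^{k+1}, z^k, λ^k) + ⟨s^k, x^k − x^{k+1}⟩ + ((γ⁻¹ − ρ)/2)‖x^{k+1} − x^k‖²; z^{k+1} = z^k − η(z^k − x^{k+1}); λ^{k+1} = λ^k + β_k(Ax^{k+1} − b). Then for every k ≥ 0: P_{β_k}(x^k, z^k, λ^k) − P_{β_{k+1}}(x^{k+1}, z^{k+1}, λ^{k+1}) ≥ ((1 − γρ)/(2γ))‖x^{k+1} − x^k‖²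 + ⟨s^k, x^k − x^{k+1}⟩ + (1/(4γ))(2/η − 1)‖z^{k+1} − z^k‖² + ((γη/2)(1 − η/2))·Φ_k² − ((β_k + β_{k+1} + γη(1 − η/2))/(2β_k²))‖λ^{k+1} − λ^k‖², where Φ_k² := (ηγ)⁻²‖z^k − z^{k+1}‖² + β_k⁻²‖λ^{k+1} − λ^k‖². -/
/-!
The descent hypothesis accounts for the `x`-step. The `(z, λ, β)`-step leaves `f` untouched and is
an exact identity: the relaxation `z⁺ = z − η(z − x)` shrinks `x − z` by the factor `1 − η`, gaining
`(1/(2γ))(2/η − 1)‖z⁺ − z‖²`, while the multiplier update `λ⁺ = λ + β r` with `r = Ax − b` costs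
`((β + β⁺)/(2β²))‖λ⁺ − λ‖²`. Half of the `z`-gain, together with a cancelling `λ`-term, is then
rewritten as the `Φ²` term.
-/

open scoped RealInnerProductSpace

section Updates

variable {E : Type*} [NormedAddCommGroup E] [InnerProductSpace ℝ E]

theorem norm_sub_sq_sub_norm_sub_sq_of_relaxation {x z z' : E} {η : ℝ} (hη : η ≠ 0)
    (hz : z' = z - η • (z - x)) :
    ‖x - z‖ ^ 2 - ‖x - z'‖ ^ 2 = (2 / η - 1) * ‖z' - z‖ ^ 2 := by
  have hxz' : x - z' = (1 - η) • (x - z) := by rw [hz]; module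
  have hz'z : z' - z = η • (x - z) := by rw [hz]; module
  rw [hxz', hz'z, norm_smul, norm_smul, mul_pow, mul_pow, Real.norm_eq_abs, Real.norm_eq_abs,
    sq_abs, sq_abs]
  field_simp
  ring

theorem inner_sub_add_norm_sq_of_eq_add_smul {lam lam' r : E} {β β' : ℝ} (hβ : β ≠ 0)
    (hlam : lam' = lam + β • r) :
    ⟪lam - lam', r⟫ + (β - β') / 2 * ‖r‖ ^ 2 = -((β + β') / (2 * β ^ 2)) * ‖lam' - lam‖ ^ 2 := by
  have hdiff : lam' - lam = β • r := by rw [hlam]; module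
  rw [hdiff, norm_smul, mul_pow, Real.norm_eq_abs, sq_abs, hlam, sub_add_cancel_left,
    inner_neg_left, real_inner_smul_left, real_inner_self_eq_norm_sq]
  field_simp
  ring

end Updates

theorem Pfun_sub_Pfun_of_relaxation_of_multiplier_update {n m : ℕ}
    (f : EuclideanSpace ℝ (Fin n) → ℝ) (A : Matrix (Fin m) (Fin n) ℝ)
    (b : EuclideanSpace ℝ (Fin m)) {γ η β β' : ℝ} {x z z' : EuclideanSpace ℝ (Fin n)}
    {lam lam' : EuclideanSpace ℝ (Fin m)} (hη : η ≠ 0) (hβ : β ≠ 0)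
    (hz : z' = z - η • (z - x)) (hlam : lam' = lam + β • (Matrix.toEuclideanLin A x - b)) :
    Pfun f A b γ β x z lam - Pfun f A b γ β' x z' lam'
      = 1 / (2 * γ) * (2 / η - 1) * ‖z' - z‖ ^ 2
        - (β + β') / (2 * β ^ 2) * ‖lam' - lam‖ ^ 2 := by
  have hprox := norm_sub_sq_sub_norm_sub_sq_of_relaxation hη hz
  have hmult := inner_sub_add_norm_sq_of_eq_add_smul (β' := β') hβ hlam
  rw [inner_sub_left] at hmult
  unfold Pfun
  linear_combination 1 / (2 * γ) * hprox + hmult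

theorem stmt_9_general (n m : ℕ) (A : Matrix (Fin m) (Fin n) ℝ) (b : EuclideanSpace ℝ (Fin m))
    (f : EuclideanSpace ℝ (Fin n) → ℝ) (ρ γ η : ℝ)
    (hγ0 : 0 < γ) (hη0 : 0 < η)
    (x z s : ℕ → EuclideanSpace ℝ (Fin n)) (lam : ℕ → EuclideanSpace ℝ (Fin m))
    (β : ℕ → ℝ) (hβ : ∀ k, 0 < β k)
    (hxdesc : ∀ k, Pfun f A b γ (β k) (x k) (z k) (lam k)
        ≥ Pfun f A b γ (β k) (x (k + 1)) (z k) (lam k)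
          + ⟪s k, x k - x (k + 1)⟫ + (γ⁻¹ - ρ) / 2 * ‖x (k + 1) - x k‖ ^ 2)
    (hz : ∀ k, z (k + 1) = z k - η • (z k - x (k + 1)))
    (hlam : ∀ k, lam (k + 1) = lam k + β k • (Matrix.toEuclideanLin A (x (k + 1)) - b)) :
    ∀ k : ℕ,
      Pfun f A b γ (β k) (x k) (z k) (lam k)
          - Pfun f A b γ (β (k + 1)) (x (k + 1)) (z (k + 1)) (lam (k + 1))
        ≥ (1 - γ * ρ) / (2 * γ) * ‖x (k + 1) - x k‖ ^ 2
          + ⟪s k, x k - x (k + 1)⟫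
          + 1 / (4 * γ) * (2 / η - 1) * ‖z (k + 1) - z k‖ ^ 2
          + γ * η / 2 * (1 - η / 2) *
            (((η * γ) ^ 2)⁻¹ * ‖z k - z (k + 1)‖ ^ 2
              + (β k ^ 2)⁻¹ * ‖lam (k + 1) - lam k‖ ^ 2)
          - (β k + β (k + 1) + γ * η * (1 - η / 2)) / (2 * β k ^ 2)
              * ‖lam (k + 1) - lam k‖ ^ 2 := by
  intro k
  have hdual := Pfun_sub_Pfun_of_relaxation_of_multiplier_update f A b (γ := γ)
    (β' := β (k + 1)) hη0.ne' (hβ k).ne' (hz k) (hlam k)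
  have hcoef : (1 - γ * ρ) / (2 * γ) = (γ⁻¹ - ρ) / 2 := by field_simp
  have hΦ : γ * η / 2 * (1 - η / 2) *
        (((η * γ) ^ 2)⁻¹ * ‖z k - z (k + 1)‖ ^ 2 + (β k ^ 2)⁻¹ * ‖lam (k + 1) - lam k‖ ^ 2)
      = 1 / (4 * γ) * (2 / η - 1) * ‖z (k + 1) - z k‖ ^ 2
        + γ * η * (1 - η / 2) / (2 * β k ^ 2) * ‖lam (k + 1) - lam k‖ ^ 2 := by
    rw [norm_sub_rev (z k)]
    field_simp
    ring
  rw [hcoef, hΦ]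
  linear_combination hxdesc k - hdual

/-- Lemma 8 (iMEAL: one-step progress). -/
theorem stmt_9 (n m : ℕ) (A : Matrix (Fin m) (Fin n) ℝ) (b : EuclideanSpace ℝ (Fin m))
    (f : EuclideanSpace ℝ (Fin n) → ℝ) (ρ γ η : ℝ)
    (hρ : 0 < ρ) (hγ0 : 0 < γ) (hγ : γ < 1 / ρ) (hη0 : 0 < η) (hη2 : η < 2)
    (hlsc : LowerSemicontinuous f)
    (hwc : ConvexOn ℝ Set.univ fun x => f x + ρ / 2 * ‖x‖ ^ 2)
    (x z s : ℕ → EuclideanSpace ℝ (Fin n)) (lam : ℕ → EuclideanSpace ℝ (Fin m))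
    (β : ℕ → ℝ) (hβ : ∀ k, 0 < β k)
    (hxdesc : ∀ k, Pfun f A b γ (β k) (x k) (z k) (lam k)
        ≥ Pfun f A b γ (β k) (x (k + 1)) (z k) (lam k)
          + ⟪s k, x k - x (k + 1)⟫ + (γ⁻¹ - ρ) / 2 * ‖x (k + 1) - x k‖ ^ 2)
    (hz : ∀ k, z (k + 1) = z k - η • (z k - x (k + 1)))
    (hlam : ∀ k, lam (k + 1) = lam k + β k • (Matrix.toEuclideanLin A (x (k + 1)) - b)) :
    ∀ k : ℕ,
      Pfun f A b γ (β k) (x k) (z k) (lam k)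
          - Pfun f A b γ (β (k + 1)) (x (k + 1)) (z (k + 1)) (lam (k + 1))
        ≥ (1 - γ * ρ) / (2 * γ) * ‖x (k + 1) - x k‖ ^ 2
          + ⟪s k, x k - x (k + 1)⟫
          + 1 / (4 * γ) * (2 / η - 1) * ‖z (k + 1) - z k‖ ^ 2
          + γ * η / 2 * (1 - η / 2) *
            (((η * γ) ^ 2)⁻¹ * ‖z k - z (k + 1)‖ ^ 2
              + (β k ^ 2)⁻¹ * ‖lam (k + 1) - lam k‖ ^ 2)
          - (β k + β (k + 1) + γ * η * (1 - η / 2)) / (2 * β k ^ 2)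
              * ‖lam (k + 1) - lam k‖ ^ 2 :=
  stmt_9_general n m A b f ρ γ η hγ0 hη0 x z s lam β hβ hxdesc hz hlam
end

section
/- Let h : ℝ^n → ℝ be differentiable with L_h-Lipschitz gradient ∇h, let g : ℝ^n → ℝ be lower semicontinuous and ρ_g-weakly convex, γ ∈ (0, 1/ρ_g), η ∈ (0, 2), and β_k > 0. Let sequences (x^k)_{k≥0}, (z^k)_{k≥0} in ℝ^n and (λ^k)_{k≥0} in ℝ^m satisfy, for every k ≥ 0: x^{k+1} is a global minimizer of x ↦ h(x^k) + ⟨∇h(x^k), x − x^k⟩ + g(x) + ⟨λ^k, Ax − b⟩ + (β_k/2)‖Ax − b‖² + (1/(2γ))‖x − z^k‖²; z^{k+1} = z^k − η(z^k − x^{k+1}); λ^{k+1} = λ^k + β_k(Ax^{k+1} − b). Then for every k ≥ 0: P_{β_k}(x^k, z^k, λ^k) − P_{β_{k+1}}(x^{k+1}, z^{k+1}, λ^{k+1}) ≥ ((1 − γ(ρ_g + L_h))/(2γ) − (γ/4)(2 − η)η L_h²)‖x^{k+1} − x^k‖² + (1/(4γ))(2/η − 1)‖z^{k+1} − z^k‖²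 + ((γη/4)(1 − η/2))·G_k² − ((β_k + β_{k+1} + γη(1 − η/2))/(2β_k²))‖λ^{k+1} − λ^k‖², where G_k² := ‖γ⁻¹(z^k − x^{k+1}) + ∇h(x^{k+1}) − ∇h(x^k)‖² + β_k⁻²‖λ^{k+1} − λ^k‖². -/
/-!
The `x`-subproblem is `(1/γ − ρ_g)`-strongly convex, the proximal term absorbing the weak
convexity of `g`; so its minimizer `x^{k+1}` beats `x^k` by `(1/γ − ρ_g)/2 ‖x^{k+1} − x^k‖²`,
and replacing the linearization of `h` by `h` itself costs at most `L_h/2 ‖x^{k+1} − x^k‖²`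
(descent lemma). The `z`- and `λ`-updates change `P` by exactly
`η(2 − η)/(2γ) ‖x^{k+1} − z^k‖² − (β_k + β_{k+1})/2 ‖Ax^{k+1} − b‖²`. Half of this `z`-gain is
the `‖z^{k+1} − z^k‖²` term; the other half pays for `G_k²`, because
`‖γ⁻¹(z^k − x^{k+1}) + ∇h(x^{k+1}) − ∇h(x^k)‖² ≤ 2γ⁻²‖x^{k+1} − z^k‖² + 2L_h²‖x^{k+1} − x^k‖²`
and `‖λ^{k+1} − λ^k‖ = β_k ‖Ax^{k+1} − b‖`.
-/

open scoped RealInnerProductSpace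

open Set Filter Topology

section
variable {E F : Type*} [NormedAddCommGroup E] [InnerProductSpace ℝ E]
  [NormedAddCommGroup F] [InnerProductSpace ℝ F]

theorem StrongConvexOn.add_sq_norm_sub_le_of_isMinOn {s : Set E} {m : ℝ} {f : E → ℝ} {x y : E}
    (hf : StrongConvexOn s m f) (hmin : IsMinOn f s y) (hx : x ∈ s) (hy : y ∈ s) :
    f y + m / 2 * ‖x - y‖ ^ 2 ≤ f x := by
  have hchord : ∀ t ∈ Ioo (0 : ℝ) 1, f y + (1 - t) * (m / 2 * ‖x - y‖ ^ 2) ≤ f x := by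
    rintro t ⟨ht0, ht1⟩
    have hconv := hf.2 hx hy ht0.le (sub_nonneg.2 ht1.le) (add_sub_cancel t 1)
    have hle : f y ≤ f (t • x + (1 - t) • y) :=
      hmin (hf.1 hx hy ht0.le (sub_nonneg.2 ht1.le) (add_sub_cancel t 1))
    simp only [smul_eq_mul] at hconv
    refine le_of_mul_le_mul_left ?_ ht0
    linarith
  have hlim : Tendsto (fun t : ℝ => f y + (1 - t) * (m / 2 * ‖x - y‖ ^ 2)) (𝓝[>] 0)
      (𝓝 (f y + m / 2 * ‖x - y‖ ^ 2)) := by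
    refine (Continuous.tendsto' ?_ 0 _ (by simp)).mono_left nhdsWithin_le_nhds
    fun_prop
  exact le_of_tendsto hlim (mem_of_superset (Ioo_mem_nhdsGT one_pos) hchord)

theorem le_add_inner_sub_add_sq_of_lipschitz_gradient [CompleteSpace E] {h : E → ℝ} {h' : E → E}
    {Lh : ℝ} (hh' : ∀ x, HasGradientAt h (h' x) x)
    (hLh : ∀ x y, ‖h' x - h' y‖ ≤ Lh * ‖x - y‖) (a a' : E) :
    h a' ≤ h a + ⟪h' a, a' - a⟫ + Lh / 2 * ‖a' - a‖ ^ 2 := by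
  set d := a' - a
  let ψ : ℝ → ℝ := fun t => h (a + t • d) - t * ⟪h' a, d⟫ - Lh / 2 * t ^ 2 * ‖d‖ ^ 2
  have hderiv : ∀ t, HasDerivAt ψ (⟪h' (a + t • d) - h' a, d⟫ - Lh * t * ‖d‖ ^ 2) t := by
    intro t
    have hline : HasDerivAt (fun s : ℝ => a + s • d) d t := by
      simpa using ((hasDerivAt_id t).smul_const d).const_add a
    have hcomp := (hh' (a + t • d)).hasFDerivAt.comp_hasDerivAt t hline
    refine ((hcomp.sub ((hasDerivAt_id t).mul_const ⟪h' a, d⟫)).sub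
      (((hasDerivAt_pow 2 t).const_mul (Lh / 2)).mul_const (‖d‖ ^ 2))).congr_deriv ?_
    rw [InnerProductSpace.toDual_apply_apply, inner_sub_left]
    ring
  have hslope : ∀ t ∈ interior (Icc (0 : ℝ) 1),
      ⟪h' (a + t • d) - h' a, d⟫ - Lh * t * ‖d‖ ^ 2 ≤ 0 := by
    intro t ht
    rw [interior_Icc] at ht
    have hlip : ‖h' (a + t • d) - h' a‖ ≤ Lh * (t * ‖d‖) := by
      simpa [norm_smul, abs_of_pos ht.1] using hLh (a + t • d) a
    have hcs : ⟪h' (a + t • d) - h' a, d⟫ ≤ Lh * (t * ‖d‖) * ‖d‖ :=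
      (real_inner_le_norm _ _).trans (by gcongr)
    linarith
  have hanti := antitoneOn_of_hasDerivWithinAt_nonpos (convex_Icc 0 1)
    (fun t _ => (hderiv t).continuousAt.continuousWithinAt)
    (fun t _ => (hderiv t).hasDerivWithinAt) hslope
  have h10 : ψ 1 ≤ ψ 0 :=
    hanti (left_mem_Icc.2 zero_le_one) (right_mem_Icc.2 zero_le_one) zero_le_one
  norm_num [ψ, d] at h10
  linarith

theorem convexOn_univ_sq_norm_map_sub (L : E →ₗ[ℝ] F) (b : F) :
    ConvexOn ℝ univ fun x => ‖L x - b‖ ^ 2 := by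
  have hsq : ConvexOn ℝ univ fun y : F => ‖y‖ ^ 2 :=
    (convexOn_norm convex_univ).pow (fun _ _ => norm_nonneg _) 2
  refine ((hsq.translate_right (-b)).comp_linearMap L).congr fun x _ => ?_
  simp [sub_eq_neg_add]

noncomputable def linearizedProxObjective (h g : E → ℝ) (h' : E → E) (L : E →ₗ[ℝ] F) (b : F)
    (γ β : ℝ) (xk zk : E) (lam : F) (u : E) : ℝ :=
  h xk + ⟪h' xk, u - xk⟫ + g u + ⟪lam, L u - b⟫ + β / 2 * ‖L u - b‖ ^ 2
    + 1 / (2 * γ) * ‖u - zk‖ ^ 2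

theorem strongConvexOn_linearizedProxObjective {h g : E → ℝ} {h' : E → E} {ρ : ℝ}
    (hg : ConvexOn ℝ univ fun x => g x + ρ / 2 * ‖x‖ ^ 2) (L : E →ₗ[ℝ] F) (b : F)
    (γ : ℝ) {β : ℝ} (hβ : 0 ≤ β) (xk zk : E) (lam : F) :
    StrongConvexOn univ (1 / γ - ρ) (linearizedProxObjective h g h' L b γ β xk zk lam) := by
  rw [strongConvexOn_iff_convex]
  have hlin : ConvexOn ℝ univ fun u =>
      (innerₛₗ ℝ (h' xk) + (innerₛₗ ℝ lam).comp L - γ⁻¹ • innerₛₗ ℝ zk) u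
        + (h xk - ⟪h' xk, xk⟫ - ⟪lam, b⟫ + ‖zk‖ ^ 2 / (2 * γ)) :=
    (LinearMap.convexOn _ convex_univ).add_const _
  have hquad := (convexOn_univ_sq_norm_map_sub L b).smul (by positivity : (0 : ℝ) ≤ β / 2)
  refine ((hg.add hquad).add hlin).congr fun u _ => ?_
  simp only [linearizedProxObjective, Pi.add_apply, smul_eq_mul, LinearMap.sub_apply,
    LinearMap.add_apply, LinearMap.comp_apply, LinearMap.smul_apply, innerₛₗ_apply_apply,
    inner_sub_right, norm_sub_sq_real u zk, real_inner_comm u zk]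
  ring

theorem norm_inv_smul_sub_add_sub_sq_le {h' : E → E} {Lh : ℝ}
    (hLh : ∀ x y, ‖h' x - h' y‖ ≤ Lh * ‖x - y‖) (γ : ℝ) (x x' z : E) :
    ‖γ⁻¹ • (z - x') + h' x' - h' x‖ ^ 2
      ≤ 2 * (γ⁻¹ ^ 2 * ‖x' - z‖ ^ 2) + 2 * (Lh ^ 2 * ‖x' - x‖ ^ 2) := by
  have hgrad : ‖h' x' - h' x‖ ^ 2 ≤ Lh ^ 2 * ‖x' - x‖ ^ 2 := by
    rw [← mul_pow]
    exact pow_le_pow_left₀ (norm_nonneg _) (hLh x' x) 2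
  have hprox : ‖γ⁻¹ • (z - x')‖ ^ 2 = γ⁻¹ ^ 2 * ‖x' - z‖ ^ 2 := by
    rw [norm_smul, mul_pow, Real.norm_eq_abs, sq_abs, norm_sub_rev]
  calc ‖γ⁻¹ • (z - x') + h' x' - h' x‖ ^ 2
      ≤ (‖γ⁻¹ • (z - x')‖ + ‖h' x' - h' x‖) ^ 2 := by
        rw [add_sub_assoc]
        exact pow_le_pow_left₀ (norm_nonneg _) (norm_add_le _ _) 2
    _ ≤ 2 * (‖γ⁻¹ • (z - x')‖ ^ 2 + ‖h' x' - h' x‖ ^ 2) := add_sq_le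
    _ ≤ 2 * (γ⁻¹ ^ 2 * ‖x' - z‖ ^ 2) + 2 * (Lh ^ 2 * ‖x' - x‖ ^ 2) := by
        rw [hprox]
        linarith

end

section
variable {n m : ℕ} {A : Matrix (Fin m) (Fin n) ℝ} {b : EuclideanSpace ℝ (Fin m)}

theorem le_Pfun_sub_Pfun_of_isMinOn {h g : EuclideanSpace ℝ (Fin n) → ℝ}
    {h' : EuclideanSpace ℝ (Fin n) → EuclideanSpace ℝ (Fin n)} {ρ γ Lh β : ℝ}
    (hh' : ∀ x, HasGradientAt h (h' x) x) (hLh : ∀ x y, ‖h' x - h' y‖ ≤ Lh * ‖x - y‖)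
    (hg : ConvexOn ℝ univ fun x => g x + ρ / 2 * ‖x‖ ^ 2) (hβ : 0 ≤ β)
    {xk x' zk : EuclideanSpace ℝ (Fin n)} {lam : EuclideanSpace ℝ (Fin m)}
    (hmin : IsMinOn (linearizedProxObjective h g h' (Matrix.toEuclideanLin A) b γ β xk zk lam)
      univ x') :
    (1 / γ - ρ - Lh) / 2 * ‖x' - xk‖ ^ 2
      ≤ Pfun (fun a => h a + g a) A b γ β xk zk lam
        - Pfun (fun a => h a + g a) A b γ β x' zk lam := by
  have hconv := strongConvexOn_linearizedProxObjective (h := h) (h' := h') hg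
    (Matrix.toEuclideanLin A) b γ hβ xk zk lam
  have hgrowth := hconv.add_sq_norm_sub_le_of_isMinOn hmin (mem_univ xk) (mem_univ x')
  have hdesc := le_add_inner_sub_add_sq_of_lipschitz_gradient hh' hLh xk x'
  rw [norm_sub_rev] at hgrowth
  simp only [linearizedProxObjective, Pfun, sub_self, inner_zero_right] at hgrowth ⊢
  linarith

theorem Pfun_sub_Pfun_of_dual_update (f : EuclideanSpace ℝ (Fin n) → ℝ) (γ η β β' : ℝ)
    {x z z' : EuclideanSpace ℝ (Fin n)} {lam lam' : EuclideanSpace ℝ (Fin m)}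
    (hz : z' = z - η • (z - x)) (hlam : lam' = lam + β • (Matrix.toEuclideanLin A x - b)) :
    Pfun f A b γ β x z lam - Pfun f A b γ β' x z' lam'
      = η * (2 - η) / (2 * γ) * ‖x - z‖ ^ 2
        - (β + β') / 2 * ‖Matrix.toEuclideanLin A x - b‖ ^ 2 := by
  have hxz : x - z' = (1 - η) • (x - z) := by rw [hz]; module
  rw [Pfun, Pfun, hxz, hlam, norm_smul, inner_add_left, real_inner_smul_left,
    real_inner_self_eq_norm_sq, mul_pow, Real.norm_eq_abs, sq_abs]
  ring

end

theorem progress_bound_of_primal_dual_bounds {γ η ρ Lh β β' X Z G R D : ℝ} (hγ : 0 < γ)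
    (hη0 : 0 < η) (hη2 : η < 2) (hβ : β ≠ 0)
    (hG : G ≤ 2 * (γ⁻¹ ^ 2 * Z) + 2 * (Lh ^ 2 * X)) (hR : 0 ≤ R)
    (hD : (1 / γ - ρ - Lh) / 2 * X + η * (2 - η) / (2 * γ) * Z - (β + β') / 2 * R ≤ D) :
    D ≥ ((1 - γ * (ρ + Lh)) / (2 * γ) - γ / 4 * (2 - η) * η * Lh ^ 2) * X
        + 1 / (4 * γ) * (2 / η - 1) * (η ^ 2 * Z)
        + γ * η / 4 * (1 - η / 2) * (G + (β ^ 2)⁻¹ * (β ^ 2 * R))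
        - (β + β' + γ * η * (1 - η / 2)) / (2 * β ^ 2) * (β ^ 2 * R) := by
  have hc : 0 ≤ γ * η / 4 * (1 - η / 2) := mul_nonneg (by positivity) (by linarith)
  have hsplit : ((1 - γ * (ρ + Lh)) / (2 * γ) - γ / 4 * (2 - η) * η * Lh ^ 2) * X
        + 1 / (4 * γ) * (2 / η - 1) * (η ^ 2 * Z)
        + γ * η / 4 * (1 - η / 2) * (G + (β ^ 2)⁻¹ * (β ^ 2 * R))
        - (β + β' + γ * η * (1 - η / 2)) / (2 * β ^ 2) * (β ^ 2 * R)
      = (1 / γ - ρ - Lh) / 2 * X + η * (2 - η) / (2 * γ) * Z - (β + β') / 2 * R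
        + γ * η / 4 * (1 - η / 2) * (G - (2 * (γ⁻¹ ^ 2 * Z) + 2 * (Lh ^ 2 * X)))
        - γ * η / 4 * (1 - η / 2) * R := by
    field_simp
    ring
  rw [ge_iff_le, hsplit]
  linarith [mul_nonneg hc (sub_nonneg.2 hG), mul_nonneg hc hR]

theorem stmt_10_general (n m : ℕ) (A : Matrix (Fin m) (Fin n) ℝ) (b : EuclideanSpace ℝ (Fin m))
    (h : EuclideanSpace ℝ (Fin n) → ℝ)
    (h' : EuclideanSpace ℝ (Fin n) → EuclideanSpace ℝ (Fin n))
    (g : EuclideanSpace ℝ (Fin n) → ℝ) (ρg γ η Lh : ℝ)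
    (hγ0 : 0 < γ) (hη0 : 0 < η) (hη2 : η < 2)
    (hh' : ∀ x, HasGradientAt h (h' x) x)
    (hLh : ∀ x y, ‖h' x - h' y‖ ≤ Lh * ‖x - y‖)
    (hwc : ConvexOn ℝ Set.univ fun x => g x + ρg / 2 * ‖x‖ ^ 2)
    (x z : ℕ → EuclideanSpace ℝ (Fin n)) (lam : ℕ → EuclideanSpace ℝ (Fin m))
    (β : ℕ → ℝ) (hβ : ∀ k, 0 < β k)
    (hxmin : ∀ k x',
      h (x k) + ⟪h' (x k), x (k + 1) - x k⟫ + g (x (k + 1))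
          + ⟪lam k, Matrix.toEuclideanLin A (x (k + 1)) - b⟫
          + β k / 2 * ‖Matrix.toEuclideanLin A (x (k + 1)) - b‖ ^ 2
          + 1 / (2 * γ) * ‖x (k + 1) - z k‖ ^ 2
        ≤ h (x k) + ⟪h' (x k), x' - x k⟫ + g x'
          + ⟪lam k, Matrix.toEuclideanLin A x' - b⟫
          + β k / 2 * ‖Matrix.toEuclideanLin A x' - b‖ ^ 2
          + 1 / (2 * γ) * ‖x' - z k‖ ^ 2)
    (hz : ∀ k, z (k + 1) = z k - η • (z k - x (k + 1)))
    (hlam : ∀ k, lam (k + 1) = lam k + β k • (Matrix.toEuclideanLin A (x (k + 1)) - b)) :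
    ∀ k : ℕ,
      Pfun (fun a => h a + g a) A b γ (β k) (x k) (z k) (lam k)
          - Pfun (fun a => h a + g a) A b γ (β (k + 1)) (x (k + 1)) (z (k + 1)) (lam (k + 1))
        ≥ ((1 - γ * (ρg + Lh)) / (2 * γ) - γ / 4 * (2 - η) * η * Lh ^ 2)
              * ‖x (k + 1) - x k‖ ^ 2
          + 1 / (4 * γ) * (2 / η - 1) * ‖z (k + 1) - z k‖ ^ 2
          + γ * η / 4 * (1 - η / 2) *
            (‖γ⁻¹ • (z k - x (k + 1)) + h' (x (k + 1)) - h' (x k)‖ ^ 2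
              + (β k ^ 2)⁻¹ * ‖lam (k + 1) - lam k‖ ^ 2)
          - (β k + β (k + 1) + γ * η * (1 - η / 2)) / (2 * β k ^ 2)
              * ‖lam (k + 1) - lam k‖ ^ 2 := by
  intro k
  have hprimal := le_Pfun_sub_Pfun_of_isMinOn (A := A) (b := b) hh' hLh hwc (hβ k).le
    (fun u _ => hxmin k u)
  have hdual := Pfun_sub_Pfun_of_dual_update (fun a => h a + g a) γ η (β k) (β (k + 1))
    (hz k) (hlam k)
  have hzstep : ‖z (k + 1) - z k‖ ^ 2 = η ^ 2 * ‖x (k + 1) - z k‖ ^ 2 := by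
    rw [show z (k + 1) - z k = η • (x (k + 1) - z k) by rw [hz k]; module,
      norm_smul, mul_pow, Real.norm_eq_abs, sq_abs]
  have hlamstep : ‖lam (k + 1) - lam k‖ ^ 2
      = β k ^ 2 * ‖Matrix.toEuclideanLin A (x (k + 1)) - b‖ ^ 2 := by
    rw [hlam k, add_sub_cancel_left, norm_smul, mul_pow, Real.norm_eq_abs, sq_abs]
  rw [hzstep, hlamstep]
  exact progress_bound_of_primal_dual_bounds hγ0 hη0 hη2 (hβ k).ne'
    (norm_inv_smul_sub_add_sub_sq_le hLh γ (x k) (x (k + 1)) (z k)) (sq_nonneg _)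
    (by linarith)

/-- Lemma 9 (LiMEAL: one-step progress). -/
theorem stmt_10 (n m : ℕ) (A : Matrix (Fin m) (Fin n) ℝ) (b : EuclideanSpace ℝ (Fin m))
    (h : EuclideanSpace ℝ (Fin n) → ℝ)
    (h' : EuclideanSpace ℝ (Fin n) → EuclideanSpace ℝ (Fin n))
    (g : EuclideanSpace ℝ (Fin n) → ℝ) (ρg γ η Lh : ℝ)
    (hρg : 0 < ρg) (hγ0 : 0 < γ) (hγ : γ < 1 / ρg) (hη0 : 0 < η) (hη2 : η < 2)
    (hh' : ∀ x, HasGradientAt h (h' x) x)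
    (hLh : ∀ x y, ‖h' x - h' y‖ ≤ Lh * ‖x - y‖)
    (hlsc : LowerSemicontinuous g)
    (hwc : ConvexOn ℝ Set.univ fun x => g x + ρg / 2 * ‖x‖ ^ 2)
    (x z : ℕ → EuclideanSpace ℝ (Fin n)) (lam : ℕ → EuclideanSpace ℝ (Fin m))
    (β : ℕ → ℝ) (hβ : ∀ k, 0 < β k)
    (hxmin : ∀ k x',
      h (x k) + ⟪h' (x k), x (k + 1) - x k⟫ + g (x (k + 1))
          + ⟪lam k, Matrix.toEuclideanLin A (x (k + 1)) - b⟫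
          + β k / 2 * ‖Matrix.toEuclideanLin A (x (k + 1)) - b‖ ^ 2
          + 1 / (2 * γ) * ‖x (k + 1) - z k‖ ^ 2
        ≤ h (x k) + ⟪h' (x k), x' - x k⟫ + g x'
          + ⟪lam k, Matrix.toEuclideanLin A x' - b⟫
          + β k / 2 * ‖Matrix.toEuclideanLin A x' - b‖ ^ 2
          + 1 / (2 * γ) * ‖x' - z k‖ ^ 2)
    (hz : ∀ k, z (k + 1) = z k - η • (z k - x (k + 1)))
    (hlam : ∀ k, lam (k + 1) = lam k + β k • (Matrix.toEuclideanLin A (x (k + 1)) - b)) :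
    ∀ k : ℕ,
      Pfun (fun a => h a + g a) A b γ (β k) (x k) (z k) (lam k)
          - Pfun (fun a => h a + g a) A b γ (β (k + 1)) (x (k + 1)) (z (k + 1)) (lam (k + 1))
        ≥ ((1 - γ * (ρg + Lh)) / (2 * γ) - γ / 4 * (2 - η) * η * Lh ^ 2)
              * ‖x (k + 1) - x k‖ ^ 2
          + 1 / (4 * γ) * (2 / η - 1) * ‖z (k + 1) - z k‖ ^ 2
          + γ * η / 4 * (1 - η / 2) *
            (‖γ⁻¹ • (z k - x (k + 1)) + h' (x (k + 1)) - h' (x k)‖ ^ 2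
              + (β k ^ 2)⁻¹ * ‖lam (k + 1) - lam k‖ ^ 2)
          - (β k + β (k + 1) + γ * η * (1 - η / 2)) / (2 * β k ^ 2)
              * ‖lam (k + 1) - lam k‖ ^ 2 :=
  stmt_10_general n m A b h h' g ρg γ η Lh hγ0 hη0 hη2 hh' hLh hwc x z lam β hβ hxmin hz hlam
end
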